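/- arXiv:1805.10715 — 5 statements merged into one kernel-verified Lean document; each statement's English description precedes it below -/
import Mathlib

section
/- For $X, Y \geq 1$, the number of quadruples $(x_1,y_1,x_2,y_2)$ of nonzero integers with $|x_i| \leq X$, $|y_i| \leq Y$ and $x_1 y_1^2 = x_2 y_2^2$ is $O(XY)$. -/
open Finset


lemma tele (N : ℕ) : ∑ i ∈ Finset.range N, (((i:ℝ)+1)^2)⁻¹ ≤ 2 := by
  have h : ∀ i : ℕ, (((i:ℝ)+1)^2)⁻¹ ≤ 2/((i:ℝ)+1) - 2/((i:ℝ)+1+1) := by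
    intro i
    have h1 : (0:ℝ) < (i:ℝ)+1 := by positivity
    have key : 2/((i:ℝ)+1) - 2/((i:ℝ)+1+1) - (((i:ℝ)+1)^2)⁻¹
        = (i:ℝ)/(((i:ℝ)+1)^2*((i:ℝ)+1+1)) := by
      field_simp
      ring
    have pos : (0:ℝ) ≤ (i:ℝ)/(((i:ℝ)+1)^2*((i:ℝ)+1+1)) := by positivity
    linarith
  calc ∑ i ∈ Finset.range N, (((i:ℝ)+1)^2)⁻¹
      ≤ ∑ i ∈ Finset.range N, (2/((i:ℝ)+1) - 2/((i:ℝ)+1+1)) := Finset.sum_le_sum (fun i _ => h i)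
    _ = 2/((0:ℝ)+1) - 2/((N:ℝ)+1) := by
        have := Finset.sum_range_sub' (f := fun i : ℕ => 2/((i:ℝ)+1)) N
        push_cast at this ⊢
        linarith [this]
    _ ≤ 2 := by
        have : (0:ℝ) ≤ 2/((N:ℝ)+1) := by positivity
        norm_num
        linarith

lemma sumIcc (N : ℕ) : ∑ n ∈ Finset.Icc 1 N, (((n:ℕ):ℝ)^2)⁻¹ ≤ 2 := by
  have : Finset.Icc 1 N ⊆ Finset.image (fun i => i + 1) (Finset.range N) := by
    intro n hn
    simp only [Finset.mem_Icc] at hn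
    simp only [Finset.mem_image, Finset.mem_range]
    exact ⟨n - 1, by omega, by omega⟩
  calc ∑ n ∈ Finset.Icc 1 N, (((n:ℕ):ℝ)^2)⁻¹
      ≤ ∑ n ∈ Finset.image (fun i => i + 1) (Finset.range N), (((n:ℕ):ℝ)^2)⁻¹ :=
        Finset.sum_le_sum_of_subset_of_nonneg this (fun _ _ _ => by positivity)
    _ = ∑ i ∈ Finset.range N, (((i:ℝ)+1)^2)⁻¹ := by
        rw [Finset.sum_image (by intro a _ b _ h; simpa using h)]
        apply Finset.sum_congr rfl; intro i _; push_cast; ring_nf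
    _ ≤ 2 := tele N



lemma sumS (M : ℤ) : ∑ a ∈ Finset.Icc (-M) M \ {0}, (((a.natAbs:ℕ):ℝ)^2)⁻¹ ≤ 4 := by
  set s := Finset.Icc (-M) M \ {0} with hs
  have hcomp := Finset.sum_comp (s := s) (f := fun n : ℕ => (((n:ℕ):ℝ)^2)⁻¹) (g := Int.natAbs)
  rw [hcomp]
  have himg : s.image Int.natAbs ⊆ Finset.Icc 1 M.toNat := by
    intro n hn
    simp only [Finset.mem_image, hs, Finset.mem_sdiff, Finset.mem_Icc, Finset.mem_singleton] at hn
    obtain ⟨a, ⟨⟨h1, h2⟩, h3⟩, rfl⟩ := hn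
    simp only [Finset.mem_Icc]
    omega
  have hfib : ∀ n ∈ s.image Int.natAbs, (s.filter (fun a => a.natAbs = n)).card ≤ 2 := by
    intro n _
    have : s.filter (fun a => a.natAbs = n) ⊆ {(n:ℤ), -(n:ℤ)} := by
      intro a ha
      simp only [Finset.mem_filter] at ha
      simp only [Finset.mem_insert, Finset.mem_singleton]
      omega
    calc (s.filter (fun a => a.natAbs = n)).card ≤ ({(n:ℤ), -(n:ℤ)} : Finset ℤ).card :=
          Finset.card_le_card this
      _ ≤ 2 := Finset.card_insert_le _ _ |>.trans (by simp)
  calc ∑ n ∈ s.image Int.natAbs, (s.filter (fun a => a.natAbs = n)).card • (((n:ℕ):ℝ)^2)⁻¹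
      ≤ ∑ n ∈ s.image Int.natAbs, 2 * (((n:ℕ):ℝ)^2)⁻¹ := by
        apply Finset.sum_le_sum
        intro n hn
        rw [nsmul_eq_mul]
        apply mul_le_mul_of_nonneg_right _ (by positivity)
        exact_mod_cast hfib n hn
    _ ≤ ∑ n ∈ Finset.Icc 1 M.toNat, 2 * (((n:ℕ):ℝ)^2)⁻¹ :=
        Finset.sum_le_sum_of_subset_of_nonneg himg (fun _ _ _ => by positivity)
    _ = 2 * ∑ n ∈ Finset.Icc 1 M.toNat, (((n:ℕ):ℝ)^2)⁻¹ := by rw [Finset.mul_sum]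
    _ ≤ 4 := by linarith [sumIcc M.toNat]



lemma halfsum (M : ℤ) :
    ∑ a ∈ Finset.Icc (-M) M \ {0}, ∑ b ∈ Finset.Icc (-M) M \ {0},
      (if b.natAbs ≤ a.natAbs then (((a.natAbs:ℕ):ℝ)^3)⁻¹ else 0) ≤ 12 := by
  set s := Finset.Icc (-M) M \ {0} with hs
  have step : ∀ a ∈ s, ∑ b ∈ s, (if b.natAbs ≤ a.natAbs then (((a.natAbs:ℕ):ℝ)^3)⁻¹ else 0)
      ≤ 3 * (((a.natAbs:ℕ):ℝ)^2)⁻¹ := by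
    intro a ha
    have ha0 : a ≠ 0 := by
      simp only [hs, Finset.mem_sdiff, Finset.mem_singleton] at ha; exact ha.2
    have hn0 : (1:ℕ) ≤ a.natAbs := by omega
    rw [Finset.sum_ite, Finset.sum_const, Finset.sum_const_zero, add_zero, nsmul_eq_mul]
    have hcard : (s.filter (fun b => b.natAbs ≤ a.natAbs)).card ≤ 3 * a.natAbs := by
      have hsub : s.filter (fun b => b.natAbs ≤ a.natAbs)
          ⊆ Finset.Icc (-(a.natAbs:ℤ)) (a.natAbs:ℤ) := by
        intro b hb
        simp only [Finset.mem_filter] at hb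
        simp only [Finset.mem_Icc]
        omega
      calc (s.filter (fun b => b.natAbs ≤ a.natAbs)).card
          ≤ (Finset.Icc (-(a.natAbs:ℤ)) (a.natAbs:ℤ)).card := Finset.card_le_card hsub
        _ = ((a.natAbs:ℤ) + 1 - (-(a.natAbs:ℤ))).toNat := Int.card_Icc _ _
        _ ≤ 3 * a.natAbs := by omega
    have h1 : ((s.filter (fun b => b.natAbs ≤ a.natAbs)).card : ℝ) ≤ 3 * (a.natAbs:ℝ) := by
      exact_mod_cast hcard
    have h2 : (0:ℝ) < ((a.natAbs:ℕ):ℝ) := by exact_mod_cast hn0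
    calc ((s.filter (fun b => b.natAbs ≤ a.natAbs)).card : ℝ) * (((a.natAbs:ℕ):ℝ)^3)⁻¹
        ≤ 3 * (a.natAbs:ℝ) * (((a.natAbs:ℕ):ℝ)^3)⁻¹ := by
          apply mul_le_mul_of_nonneg_right h1 (by positivity)
      _ = 3 * (((a.natAbs:ℕ):ℝ)^2)⁻¹ := by field_simp
  calc ∑ a ∈ s, ∑ b ∈ s, (if b.natAbs ≤ a.natAbs then (((a.natAbs:ℕ):ℝ)^3)⁻¹ else 0)
      ≤ ∑ a ∈ s, 3 * (((a.natAbs:ℕ):ℝ)^2)⁻¹ := Finset.sum_le_sum step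
    _ = 3 * ∑ a ∈ s, (((a.natAbs:ℕ):ℝ)^2)⁻¹ := by rw [Finset.mul_sum]
    _ ≤ 12 := by linarith [sumS M]

lemma sumBox (M : ℤ) :
    ∑ p ∈ (Finset.Icc (-M) M \ {0}) ×ˢ (Finset.Icc (-M) M \ {0}),
      (((max p.1.natAbs p.2.natAbs : ℕ):ℝ)^3)⁻¹ ≤ 24 := by
  set s := Finset.Icc (-M) M \ {0} with hs
  have hpt : ∀ p : ℤ × ℤ, (((max p.1.natAbs p.2.natAbs : ℕ):ℝ)^3)⁻¹
      ≤ (if p.2.natAbs ≤ p.1.natAbs then (((p.1.natAbs:ℕ):ℝ)^3)⁻¹ else 0)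
        + (if p.1.natAbs ≤ p.2.natAbs then (((p.2.natAbs:ℕ):ℝ)^3)⁻¹ else 0) := by
    intro p
    rcases le_total p.2.natAbs p.1.natAbs with h | h
    · rw [max_eq_left h, if_pos h]
      have : (0:ℝ) ≤ (if p.1.natAbs ≤ p.2.natAbs then (((p.2.natAbs:ℕ):ℝ)^3)⁻¹ else 0) := by
        split <;> positivity
      linarith
    · rw [max_eq_right h, if_pos h]
      have : (0:ℝ) ≤ (if p.2.natAbs ≤ p.1.natAbs then (((p.1.natAbs:ℕ):ℝ)^3)⁻¹ else 0) := by
        split <;> positivity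
      linarith
  calc ∑ p ∈ s ×ˢ s, (((max p.1.natAbs p.2.natAbs : ℕ):ℝ)^3)⁻¹
      ≤ ∑ p ∈ s ×ˢ s, ((if p.2.natAbs ≤ p.1.natAbs then (((p.1.natAbs:ℕ):ℝ)^3)⁻¹ else 0)
        + (if p.1.natAbs ≤ p.2.natAbs then (((p.2.natAbs:ℕ):ℝ)^3)⁻¹ else 0)) :=
        Finset.sum_le_sum (fun p _ => hpt p)
    _ = (∑ a ∈ s, ∑ b ∈ s, (if b.natAbs ≤ a.natAbs then (((a.natAbs:ℕ):ℝ)^3)⁻¹ else 0))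
        + (∑ a ∈ s, ∑ b ∈ s, (if a.natAbs ≤ b.natAbs then (((b.natAbs:ℕ):ℝ)^3)⁻¹ else 0)) := by
        rw [Finset.sum_add_distrib, Finset.sum_product, Finset.sum_product]
    _ ≤ 12 + 12 := by
        have h2 : (∑ a ∈ s, ∑ b ∈ s, (if a.natAbs ≤ b.natAbs then (((b.natAbs:ℕ):ℝ)^3)⁻¹ else 0))
            ≤ 12 := by
          rw [Finset.sum_comm]
          exact halfsum M
        exact add_le_add (halfsum M) h2
    _ = 24 := by norm_num


lemma param (x1 y1 x2 y2 : ℤ) (hy1 : y1 ≠ 0) (hy2 : y2 ≠ 0)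
    (heq : x1 * y1^2 = x2 * y2^2) :
    y1 = (Int.gcd y1 y2 : ℤ) * (y1 / (Int.gcd y1 y2 : ℤ)) ∧
    y2 = (Int.gcd y1 y2 : ℤ) * (y2 / (Int.gcd y1 y2 : ℤ)) ∧
    x1 = (x1 / (y2 / (Int.gcd y1 y2 : ℤ))^2) * (y2 / (Int.gcd y1 y2 : ℤ))^2 ∧
    x2 = (x1 / (y2 / (Int.gcd y1 y2 : ℤ))^2) * (y1 / (Int.gcd y1 y2 : ℤ))^2 := by
  set G : ℤ := (Int.gcd y1 y2 : ℤ) with hGdef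
  have hGpos : 0 < Int.gcd y1 y2 := Int.gcd_pos_of_ne_zero_left y2 hy1
  have hG0 : G ≠ 0 := by
    simp only [hGdef]
    exact_mod_cast hGpos.ne'
  set a : ℤ := y1 / G with hadef
  set b : ℤ := y2 / G with hbdef
  have hya : G * a = y1 := Int.mul_ediv_cancel' (Int.gcd_dvd_left y1 y2)
  have hyb : G * b = y2 := Int.mul_ediv_cancel' (Int.gcd_dvd_right y1 y2)
  have hb0 : b ≠ 0 := by
    intro h; rw [h, mul_zero] at hyb; exact hy2 hyb.symm
  have hco : IsCoprime a b := by
    rw [Int.isCoprime_iff_gcd_eq_one]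
    exact Int.gcd_div_gcd_div_gcd hGpos
  have heq2 : x1 * a^2 = x2 * b^2 := by
    have h : G^2 * (x1 * a^2) = G^2 * (x2 * b^2) := by
      have e1 : x1 * (G*a)^2 = x2 * (G*b)^2 := by rw [hya, hyb]; exact heq
      ring_nf at e1 ⊢
      linarith [e1]
    exact mul_left_cancel₀ (pow_ne_zero 2 hG0) h
  have hdvd : b^2 ∣ x1 := by
    have h1 : b^2 ∣ x1 * a^2 := ⟨x2, by linarith [heq2]⟩
    exact (hco.symm.pow).dvd_of_dvd_mul_right h1
  set t : ℤ := x1 / b^2 with htdef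
  have hx1t : t * b^2 = x1 := Int.ediv_mul_cancel hdvd
  have hx2t : x2 = t * a^2 := by
    have h : x2 * b^2 = (t * a^2) * b^2 := by rw [← heq2, ← hx1t]; ring
    exact mul_right_cancel₀ (pow_ne_zero 2 hb0) h
  exact ⟨hya.symm, hyb.symm, hx1t.symm, hx2t⟩




lemma main (X Y : ℝ) (hX : 1 ≤ X) (hY : 1 ≤ Y) :
    (Nat.card {q : ℤ × ℤ × ℤ × ℤ //
      q.1 ≠ 0 ∧ q.2.1 ≠ 0 ∧ q.2.2.1 ≠ 0 ∧ q.2.2.2 ≠ 0 ∧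
      |(q.1 : ℝ)| ≤ X ∧ |(q.2.2.1 : ℝ)| ≤ X ∧ |(q.2.1 : ℝ)| ≤ Y ∧ |(q.2.2.2 : ℝ)| ≤ Y ∧
      q.1 * q.2.1 ^ 2 = q.2.2.1 * q.2.2.2 ^ 2} : ℝ) ≤ 72 * X * Y := by
  classical
  have hX0 : (0:ℝ) < X := lt_of_lt_of_le one_pos hX
  have hY0 : (0:ℝ) < Y := lt_of_lt_of_le one_pos hY
  set M : ℤ := ⌊Y⌋ with hMdef
  set s : Finset ℤ := Finset.Icc (-M) M \ {0} with hs
  set mx : ℤ × ℤ → ℝ := fun p => ((max p.1.natAbs p.2.natAbs : ℕ) : ℝ) with hmx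
  set Kf : ℤ × ℤ → ℤ := fun p => ⌊X / (mx p)^2⌋ with hKf
  set Lf : ℤ × ℤ → ℤ := fun p => ⌊Y / mx p⌋ with hLf
  set inn : ℤ × ℤ → Finset (ℤ × ℤ) :=
    fun p => (Finset.Icc (-(Kf p)) (Kf p) \ {0}) ×ˢ Finset.Icc 1 (Lf p) with hinn
  set T : Finset ((ℤ × ℤ) × (ℤ × ℤ)) := (s ×ˢ s).biUnion (fun p => {p} ×ˢ inn p) with hT
  set Sub := {q : ℤ × ℤ × ℤ × ℤ //
      q.1 ≠ 0 ∧ q.2.1 ≠ 0 ∧ q.2.2.1 ≠ 0 ∧ q.2.2.2 ≠ 0 ∧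
      |(q.1 : ℝ)| ≤ X ∧ |(q.2.2.1 : ℝ)| ≤ X ∧ |(q.2.1 : ℝ)| ≤ Y ∧ |(q.2.2.2 : ℝ)| ≤ Y ∧
      q.1 * q.2.1 ^ 2 = q.2.2.1 * q.2.2.2 ^ 2} with hSub
  set F : Sub → (ℤ × ℤ) × (ℤ × ℤ) := fun q =>
    ((q.val.2.1 / (Int.gcd q.val.2.1 q.val.2.2.2 : ℤ),
      q.val.2.2.2 / (Int.gcd q.val.2.1 q.val.2.2.2 : ℤ)),
     (q.val.1 / (q.val.2.2.2 / (Int.gcd q.val.2.1 q.val.2.2.2 : ℤ))^2,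
      (Int.gcd q.val.2.1 q.val.2.2.2 : ℤ))) with hF
  set R : (ℤ × ℤ) × (ℤ × ℤ) → ℤ × ℤ × ℤ × ℤ := fun w =>
    (w.2.1 * w.1.2^2, w.2.2 * w.1.1, w.2.1 * w.1.1^2, w.2.2 * w.1.2) with hR
  have habs : ∀ z : ℤ, ((z.natAbs : ℕ) : ℝ) = |(z:ℝ)| := by
    intro z
    rw [Nat.cast_natAbs, Int.cast_abs]
  -- reconstruction
  have hrec : ∀ q : Sub, q.val = R (F q) := by
    intro q
    obtain ⟨hx1, hy1, hx2, hy2, hbx1, hbx2, hby1, hby2, heq⟩ := q.2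
    obtain ⟨e1, e2, e3, e4⟩ := param q.val.1 q.val.2.1 q.val.2.2.1 q.val.2.2.2 hy1 hy2 heq
    simp only [hR, hF]
    exact Prod.ext e3 (Prod.ext e1 (Prod.ext e4 e2))
  -- membership
  have hmem : ∀ q : Sub, F q ∈ T := by
    intro q
    obtain ⟨hx1, hy1, hx2, hy2, hbx1, hbx2, hby1, hby2, heq⟩ := q.2
    obtain ⟨e1, e2, e3, e4⟩ := param q.val.1 q.val.2.1 q.val.2.2.1 q.val.2.2.2 hy1 hy2 heq
    set g : ℤ := (Int.gcd q.val.2.1 q.val.2.2.2 : ℤ) with hgdef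
    set a : ℤ := q.val.2.1 / g with hadef
    set b : ℤ := q.val.2.2.2 / g with hbdef
    set t : ℤ := q.val.1 / b^2 with htdef
    have hg1 : 1 ≤ g := by
      have h := Int.gcd_pos_of_ne_zero_left q.val.2.2.2 hy1
      have : (0:ℤ) < g := by simp only [hgdef]; exact_mod_cast h
      omega
    have ha0 : a ≠ 0 := by
      intro h0; rw [h0, mul_zero] at e1; exact hy1 e1
    have hb0 : b ≠ 0 := by
      intro h0; rw [h0, mul_zero] at e2; exact hy2 e2
    have ht0 : t ≠ 0 := by
      intro h0; rw [h0, zero_mul] at e3; exact hx1 e3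
    -- real facts
    have hga : ((g:ℝ)) * |(a:ℝ)| ≤ Y := by
      have : |(q.val.2.1 : ℝ)| = (g:ℝ) * |(a:ℝ)| := by
        rw [e1]; push_cast; rw [abs_mul, abs_of_pos (by exact_mod_cast hg1 : (0:ℝ) < (g:ℝ))]
      linarith [hby1, this.symm.le, this.le]
    have hgb : ((g:ℝ)) * |(b:ℝ)| ≤ Y := by
      have : |(q.val.2.2.2 : ℝ)| = (g:ℝ) * |(b:ℝ)| := by
        rw [e2]; push_cast; rw [abs_mul, abs_of_pos (by exact_mod_cast hg1 : (0:ℝ) < (g:ℝ))]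
      linarith [hby2]
    have hgR : (1:ℝ) ≤ (g:ℝ) := by exact_mod_cast hg1
    have haY : |(a:ℝ)| ≤ Y := by nlinarith [abs_nonneg ((a:ℝ))]
    have hbY : |(b:ℝ)| ≤ Y := by nlinarith [abs_nonneg ((b:ℝ))]
    have htb : |(t:ℝ)| * (b:ℝ)^2 ≤ X := by
      have : |(q.val.1 : ℝ)| = |(t:ℝ)| * (b:ℝ)^2 := by
        rw [e3]; push_cast; rw [abs_mul, abs_pow, sq_abs]
      linarith [hbx1]
    have hta : |(t:ℝ)| * (a:ℝ)^2 ≤ X := by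
      have : |(q.val.2.2.1 : ℝ)| = |(t:ℝ)| * (a:ℝ)^2 := by
        rw [e4]; push_cast; rw [abs_mul, abs_pow, sq_abs]
      linarith [hbx2]
    -- the max
    have hmxab : mx (a, b) = max (|(a:ℝ)|) (|(b:ℝ)|) := by
      simp only [hmx]
      push_cast [habs]
      rfl
    have hm1 : (1:ℝ) ≤ mx (a, b) := by
      rw [hmxab]
      have : (1:ℤ) ≤ |a| := Int.one_le_abs ha0
      have h1 : (1:ℝ) ≤ |(a:ℝ)| := by rw [← Int.cast_abs]; exact_mod_cast this
      exact le_trans h1 (le_max_left _ _)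
    have hm0 : (0:ℝ) < mx (a, b) := lt_of_lt_of_le one_pos hm1
    have htm : |(t:ℝ)| * (mx (a, b))^2 ≤ X := by
      rw [hmxab]
      rcases le_total (|(a:ℝ)|) (|(b:ℝ)|) with h | h
      · rw [max_eq_right h, sq_abs]; exact htb
      · rw [max_eq_left h, sq_abs]; exact hta
    have hgm : (g:ℝ) * mx (a, b) ≤ Y := by
      rw [hmxab]
      rcases le_total (|(a:ℝ)|) (|(b:ℝ)|) with h | h
      · rw [max_eq_right h]; exact hgb
      · rw [max_eq_left h]; exact hga
    -- memberships
    have haM : |a| ≤ M := by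
      rw [hMdef]
      apply Int.le_floor.mpr
      rw [Int.cast_abs]; exact haY
    have hbM : |b| ≤ M := by
      rw [hMdef]
      apply Int.le_floor.mpr
      rw [Int.cast_abs]; exact hbY
    have haM' := abs_le.mp haM
    have hbM' := abs_le.mp hbM
    have hpmem : (a, b) ∈ s ×ˢ s := by
      rw [Finset.mem_product]
      constructor <;> (rw [hs, Finset.mem_sdiff, Finset.mem_Icc, Finset.mem_singleton])
      · exact ⟨⟨haM'.1, haM'.2⟩, ha0⟩
      · exact ⟨⟨hbM'.1, hbM'.2⟩, hb0⟩
    have htK : |t| ≤ Kf (a, b) := by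
      apply Int.le_floor.mpr
      rw [Int.cast_abs, le_div_iff₀ (by positivity)]
      exact htm
    have hgL : g ≤ Lf (a, b) := by
      apply Int.le_floor.mpr
      rw [le_div_iff₀ hm0]
      exact hgm
    have htK' := abs_le.mp htK
    have htgmem : (t, g) ∈ inn (a, b) := by
      rw [hinn, Finset.mem_product, Finset.mem_sdiff, Finset.mem_Icc, Finset.mem_singleton,
        Finset.mem_Icc]
      exact ⟨⟨⟨htK'.1, htK'.2⟩, ht0⟩, hg1, hgL⟩
    rw [hT, Finset.mem_biUnion]
    refine ⟨(a, b), hpmem, ?_⟩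
    rw [Finset.mem_product, Finset.mem_singleton]
    exact ⟨rfl, htgmem⟩
  -- injectivity and card bound via T
  set F' : Sub → ↥T := fun q => ⟨F q, hmem q⟩ with hF'
  have hinj : Function.Injective F' := by
    intro q q' h
    have hFeq : F q = F q' := by
      simpa [hF'] using congrArg Subtype.val h
    apply Subtype.ext
    rw [hrec q, hrec q', hFeq]
  have h1 : Nat.card Sub ≤ T.card := by
    have := Nat.card_le_card_of_injective F' hinj
    rwa [Nat.card_eq_finsetCard] at this
  -- counting T
  have hcard : ∀ p ∈ s ×ˢ s, ((inn p).card : ℝ) ≤ 3 * X * Y * ((mx p)^3)⁻¹ := by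
    intro p hp
    rw [Finset.mem_product] at hp
    have hp1 : p.1 ≠ 0 := by
      have := hp.1; rw [hs, Finset.mem_sdiff, Finset.mem_singleton] at this; exact this.2
    have hm1 : (1:ℝ) ≤ mx p := by
      simp only [hmx]
      have : 1 ≤ max p.1.natAbs p.2.natAbs := by
        have : 1 ≤ p.1.natAbs := by omega
        omega
      exact_mod_cast this
    have hm0 : (0:ℝ) < mx p := lt_of_lt_of_le one_pos hm1
    have hcard1 : (((Finset.Icc (-(Kf p)) (Kf p) \ {0}).card : ℕ) : ℝ) ≤ 3 * (X / (mx p)^2) := by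
      rcases le_or_gt (Kf p) 0 with hK | hK
      · have : Finset.Icc (-(Kf p)) (Kf p) \ {0} = ∅ := by
          ext x
          simp only [Finset.mem_sdiff, Finset.mem_Icc, Finset.mem_singleton,
            Finset.notMem_empty, iff_false]
          omega
        rw [this]
        simp
        positivity
      · have hKle : ((Kf p : ℤ) : ℝ) ≤ X / (mx p)^2 := Int.floor_le _
        calc (((Finset.Icc (-(Kf p)) (Kf p) \ {0}).card : ℕ) : ℝ)
            ≤ (((Finset.Icc (-(Kf p)) (Kf p)).card : ℕ) : ℝ) := by
              exact_mod_cast Finset.card_le_card (Finset.sdiff_subset)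
          _ = ((Kf p + 1 - -(Kf p)).toNat : ℝ) := by rw [Int.card_Icc]
          _ = ((Kf p : ℤ) : ℝ) + 1 + (Kf p : ℝ) := by
              have h0 : ((Kf p + 1 - -Kf p).toNat : ℝ) = ((Kf p + 1 - -Kf p : ℤ) : ℝ) := by
                exact_mod_cast Int.toNat_of_nonneg (by omega : (0:ℤ) ≤ Kf p + 1 - -Kf p)
              rw [h0]; push_cast; ring
          _ ≤ 3 * (X / (mx p)^2) := by
              have hK1 : (1:ℝ) ≤ ((Kf p : ℤ) : ℝ) := by exact_mod_cast hK
              linarith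
    have hcard2 : (((Finset.Icc (1:ℤ) (Lf p)).card : ℕ) : ℝ) ≤ Y / mx p := by
      rw [Int.card_Icc]
      rcases le_or_gt (Lf p) 0 with hL | hL
      · have : (Lf p + 1 - 1).toNat = 0 := by omega
        rw [this]
        simp
        positivity
      · have h0 : ((Lf p + 1 - 1).toNat : ℝ) = ((Lf p + 1 - 1 : ℤ) : ℝ) := by
          exact_mod_cast Int.toNat_of_nonneg (by omega : (0:ℤ) ≤ Lf p + 1 - 1)
        rw [h0]
        have hfl : ((Lf p : ℤ) : ℝ) ≤ Y / mx p := Int.floor_le _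
        push_cast
        linarith
    have hprod : ((inn p).card : ℝ)
        = (((Finset.Icc (-(Kf p)) (Kf p) \ {0}).card : ℕ) : ℝ)
          * (((Finset.Icc (1:ℤ) (Lf p)).card : ℕ) : ℝ) := by
      rw [hinn]
      push_cast [Finset.card_product]
      ring
    rw [hprod]
    have hnn1 : (0:ℝ) ≤ (((Finset.Icc (-(Kf p)) (Kf p) \ {0}).card : ℕ) : ℝ) := by exact Nat.cast_nonneg _
    have hnn2 : (0:ℝ) ≤ (((Finset.Icc (1:ℤ) (Lf p)).card : ℕ) : ℝ) := by exact Nat.cast_nonneg _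
    calc (((Finset.Icc (-(Kf p)) (Kf p) \ {0}).card : ℕ) : ℝ)
          * (((Finset.Icc (1:ℤ) (Lf p)).card : ℕ) : ℝ)
        ≤ (3 * (X / (mx p)^2)) * (Y / mx p) := by
          apply mul_le_mul hcard1 hcard2 hnn2 (by positivity)
      _ = 3 * X * Y * ((mx p)^3)⁻¹ := by
          field_simp
  have h2 : (T.card : ℝ) ≤ ∑ p ∈ s ×ˢ s, ((inn p).card : ℝ) := by
    have := Finset.card_biUnion_le (s := s ×ˢ s) (t := fun p => {p} ×ˢ inn p)
    have heq2 : ∀ p : ℤ × ℤ, (({p} ×ˢ inn p).card) = (inn p).card := by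
      intro p
      rw [Finset.card_product, Finset.card_singleton, one_mul]
    calc (T.card : ℝ) ≤ ((∑ p ∈ s ×ˢ s, ({p} ×ˢ inn p).card : ℕ) : ℝ) := by
          exact_mod_cast this
      _ = ∑ p ∈ s ×ˢ s, ((inn p).card : ℝ) := by
          push_cast
          exact Finset.sum_congr rfl (fun p _ => by rw [heq2])
  calc (Nat.card Sub : ℝ) ≤ (T.card : ℝ) := by exact_mod_cast h1
    _ ≤ ∑ p ∈ s ×ˢ s, ((inn p).card : ℝ) := h2
    _ ≤ ∑ p ∈ s ×ˢ s, 3 * X * Y * ((mx p)^3)⁻¹ := Finset.sum_le_sum hcard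
    _ = 3 * X * Y * ∑ p ∈ s ×ˢ s, ((mx p)^3)⁻¹ := by rw [Finset.mul_sum]
    _ ≤ 3 * X * Y * 24 := by
        have hsum := sumBox M
        have : ∑ p ∈ s ×ˢ s, ((mx p)^3)⁻¹ ≤ 24 := by
          rw [hs]; simp only [hmx]; exact_mod_cast hsum
        nlinarith [this, mul_pos (mul_pos (by norm_num : (0:ℝ) < 3) hX0) hY0]
    _ = 72 * X * Y := by ring

theorem stmt_1 : ∃ C : ℝ, 0 < C ∧ ∀ X Y : ℝ, 1 ≤ X → 1 ≤ Y →
    (Nat.card {q : ℤ × ℤ × ℤ × ℤ //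
      q.1 ≠ 0 ∧ q.2.1 ≠ 0 ∧ q.2.2.1 ≠ 0 ∧ q.2.2.2 ≠ 0 ∧
      |(q.1 : ℝ)| ≤ X ∧ |(q.2.2.1 : ℝ)| ≤ X ∧ |(q.2.1 : ℝ)| ≤ Y ∧ |(q.2.2.2 : ℝ)| ≤ Y ∧
      q.1 * q.2.1 ^ 2 = q.2.2.1 * q.2.2.2 ^ 2} : ℝ) ≤ C * X * Y := by
  exact ⟨72, by norm_num, fun X Y hX hY => main X Y hX hY⟩
end

section
/- Let $\rho(k)$ denote the number of quadruples $(x_1,x_2,y_1,y_2) \in (\mathbb{Z}/k\mathbb{Z})^4$ with $x_1 y_1^2 \equiv x_2 y_2^2 \pmod{k}$. Then $\rho$ is multiplicative and for every prime $p$ and every $e \geq 1$ we have $\rho(p^e) \leq (e+1) p^{3e}$. -/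
/-- `rho k` is the number of quadruples `(x₁, x₂, y₁, y₂) ∈ (ℤ/kℤ)⁴` with
`x₁ y₁² = x₂ y₂²`. -/
noncomputable def rho (k : ℕ) : ℕ :=
  Nat.card {q : ZMod k × ZMod k × ZMod k × ZMod k //
    q.1 * q.2.2.1 ^ 2 = q.2.1 * q.2.2.2 ^ 2}

namespace RhoAux

open Finset

abbrev Sol (R : Type*) [CommRing R] : Type _ :=
  {q : R × R × R × R // q.1 * q.2.2.1 ^ 2 = q.2.1 * q.2.2.2 ^ 2}

def solCongr {R S : Type*} [CommRing R] [CommRing S] (f : R ≃+* S) : Sol R ≃ Sol S where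
  toFun q := ⟨(f q.1.1, f q.1.2.1, f q.1.2.2.1, f q.1.2.2.2), by
    obtain ⟨⟨x1, x2, y1, y2⟩, h⟩ := q
    simpa [← map_pow, ← map_mul] using congrArg f h⟩
  invFun q := ⟨(f.symm q.1.1, f.symm q.1.2.1, f.symm q.1.2.2.1, f.symm q.1.2.2.2), by
    obtain ⟨⟨x1, x2, y1, y2⟩, h⟩ := q
    simpa [← map_pow, ← map_mul] using congrArg f.symm h⟩
  left_inv q := by obtain ⟨⟨x1, x2, y1, y2⟩, h⟩ := q; simp
  right_inv q := by obtain ⟨⟨x1, x2, y1, y2⟩, h⟩ := q; simp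

def solProd (R S : Type*) [CommRing R] [CommRing S] : Sol (R × S) ≃ Sol R × Sol S where
  toFun q :=
    (⟨(q.1.1.1, q.1.2.1.1, q.1.2.2.1.1, q.1.2.2.2.1), by
        simpa using congrArg Prod.fst q.2⟩,
     ⟨(q.1.1.2, q.1.2.1.2, q.1.2.2.1.2, q.1.2.2.2.2), by
        simpa using congrArg Prod.snd q.2⟩)
  invFun q :=
    ⟨((q.1.1.1, q.2.1.1), (q.1.1.2.1, q.2.1.2.1), (q.1.1.2.2.1, q.2.1.2.2.1),
      (q.1.1.2.2.2, q.2.1.2.2.2)), by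
        obtain ⟨⟨⟨a1, a2, a3, a4⟩, ha⟩, ⟨⟨b1, b2, b3, b4⟩, hb⟩⟩ := q
        exact Prod.ext (by simpa using ha) (by simpa using hb)⟩
  left_inv q := rfl
  right_inv q := rfl

lemma rho_mul (m n : ℕ) (h : Nat.Coprime m n) : rho (m * n) = rho m * rho n := by
  have e1 : Sol (ZMod (m * n)) ≃ Sol (ZMod m) × Sol (ZMod n) :=
    (solCongr (ZMod.chineseRemainder h)).trans (solProd _ _)
  show Nat.card (Sol (ZMod (m * n))) = Nat.card (Sol (ZMod m)) * Nat.card (Sol (ZMod n))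
  rw [Nat.card_congr e1, Nat.card_prod]

lemma range_filter_dvd_card (N d : ℕ) (hd0 : 0 < d) (hdN : d ∣ N) :
    ((Finset.range N).filter (d ∣ ·)).card = N / d := by
  have himg : (Finset.range N).filter (d ∣ ·) = (Finset.range (N / d)).image (d * ·) := by
    ext i
    simp only [Finset.mem_filter, Finset.mem_range, Finset.mem_image]
    constructor
    · rintro ⟨hi, k, rfl⟩
      exact ⟨k, (Nat.lt_div_iff_mul_lt' hdN k).2 hi, rfl⟩
    · rintro ⟨k, hk, rfl⟩
      exact ⟨(Nat.lt_div_iff_mul_lt' hdN k).1 hk, ⟨k, rfl⟩⟩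
  rw [himg, Finset.card_image_of_injective _ (mul_right_injective₀ hd0.ne'), Finset.card_range]

lemma filter_card_le {N : ℕ} [NeZero N] (Q : ZMod N → Prop) [DecidablePred Q]
    (d : ℕ) (hd0 : 0 < d) (hdN : d ∣ N) (h : ∀ y, Q y → d ∣ y.val) :
    (Finset.univ.filter Q).card ≤ N / d := by
  calc (Finset.univ.filter Q).card
      ≤ (Finset.univ.filter (fun y : ZMod N => d ∣ y.val)).card := by
        apply Finset.card_le_card
        intro y hy
        simp only [Finset.mem_filter, Finset.mem_univ, true_and] at *
        exact h y hy
    _ = ((Finset.range N).filter (d ∣ ·)).card := by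
        apply Finset.card_bij (fun y _ => y.val)
        · intro y hy
          simp only [Finset.mem_filter, Finset.mem_univ, true_and, Finset.mem_range] at *
          exact ⟨ZMod.val_lt y, hy⟩
        · intro y _ y' _ hv
          exact ZMod.val_injective N hv
        · intro i hi
          simp only [Finset.mem_filter, Finset.mem_range] at hi
          refine ⟨(i : ZMod N), ?_, ZMod.val_cast_of_lt hi.1⟩
          simp only [Finset.mem_filter, Finset.mem_univ, true_and, ZMod.val_cast_of_lt hi.1]
          exact hi.2
    _ = N / d := range_filter_dvd_card N d hd0 hdN

lemma card_single_le {N : ℕ} [NeZero N] (a c : ZMod N) :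
    Nat.card {x : ZMod N // x * a = c} ≤ Nat.gcd a.val N := by
  classical
  have hN : 0 < N := Nat.pos_of_ne_zero (NeZero.ne N)
  set g := Nat.gcd a.val N with hg
  have hg0 : 0 < g := Nat.gcd_pos_of_pos_right _ hN
  have hgN : g ∣ N := Nat.gcd_dvd_right _ _
  by_cases h : ∃ x0 : ZMod N, x0 * a = c
  · obtain ⟨x0, hx0⟩ := h
    have step1 : Nat.card {x : ZMod N // x * a = c} ≤ Nat.card {x : ZMod N // x * a = 0} := by
      apply Nat.card_le_card_of_injective
        (fun x => (⟨x.1 - x0, by rw [sub_mul, x.2, hx0, sub_self]⟩ : {x : ZMod N // x * a = 0}))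
      intro u v huv
      have h2 := congrArg Subtype.val huv
      simp only at h2
      exact Subtype.ext (sub_left_inj.mp h2)
    refine step1.trans ?_
    have key : ∀ x : ZMod N, x * a = 0 → (N / g) ∣ x.val := by
      intro x hx
      have h1 : N ∣ x.val * a.val := by
        have h2 := congrArg ZMod.val hx
        rw [ZMod.val_mul, ZMod.val_zero] at h2
        exact Nat.dvd_of_mod_eq_zero h2
      have h2 : (N / g) * g ∣ (x.val * (a.val / g)) * g := by
        rw [Nat.div_mul_cancel hgN, mul_assoc, Nat.div_mul_cancel (Nat.gcd_dvd_left a.val N)]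
        exact h1
      have h3 : (N / g) ∣ x.val * (a.val / g) := (Nat.mul_dvd_mul_iff_right hg0).1 h2
      exact (Nat.coprime_div_gcd_div_gcd hg0).symm.dvd_of_dvd_mul_right h3
    rw [Nat.card_eq_fintype_card, Fintype.card_subtype]
    have hb := filter_card_le (fun x : ZMod N => x * a = 0) (N / g)
      (Nat.div_pos (Nat.le_of_dvd hN hgN) hg0) (Nat.div_dvd_of_dvd hgN) key
    rwa [Nat.div_div_self hgN hN.ne'] at hb
  · have : IsEmpty {x : ZMod N // x * a = c} := ⟨fun x => h ⟨x.1, x.2⟩⟩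
    rw [Nat.card_of_isEmpty]
    exact Nat.zero_le _

lemma pair_card_le {N : ℕ} [NeZero N] (a b : ZMod N) :
    Nat.card {x : ZMod N × ZMod N // x.1 * a = x.2 * b} ≤ N * Nat.gcd a.val N := by
  classical
  have e : {x : ZMod N × ZMod N // x.1 * a = x.2 * b} ≃
      (Σ x2 : ZMod N, {x1 : ZMod N // x1 * a = x2 * b}) :=
    { toFun := fun x => ⟨x.1.2, x.1.1, x.2⟩
      invFun := fun s => ⟨(s.2.1, s.1), s.2.2⟩
      left_inv := fun x => rfl
      right_inv := fun s => rfl }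
  rw [Nat.card_congr e, Nat.card_eq_fintype_card, Fintype.card_sigma]
  calc ∑ x2 : ZMod N, Fintype.card {x1 : ZMod N // x1 * a = x2 * b}
      ≤ ∑ _x2 : ZMod N, Nat.gcd a.val N := by
        apply Finset.sum_le_sum
        intro x2 _
        rw [← Nat.card_eq_fintype_card]
        exact card_single_le a (x2 * b)
    _ = N * Nat.gcd a.val N := by
        rw [Finset.sum_const, Finset.card_univ, ZMod.card, smul_eq_mul]

lemma pair_card_le' {N : ℕ} [NeZero N] (a b : ZMod N) :
    Nat.card {x : ZMod N × ZMod N // x.1 * a = x.2 * b} ≤ N * Nat.gcd b.val N := by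
  have e : {x : ZMod N × ZMod N // x.1 * a = x.2 * b} ≃
      {x : ZMod N × ZMod N // x.1 * b = x.2 * a} :=
    { toFun := fun x => ⟨(x.1.2, x.1.1), x.2.symm⟩
      invFun := fun x => ⟨(x.1.2, x.1.1), x.2.symm⟩
      left_inv := fun x => rfl
      right_inv := fun x => rfl }
  rw [Nat.card_congr e]
  exact pair_card_le b a

lemma gcd_val_sq {N : ℕ} [NeZero N] (y : ZMod N) :
    Nat.gcd ((y ^ 2).val) N = Nat.gcd (y.val ^ 2) N := by
  rw [pow_two, pow_two, ZMod.val_mul, ← Nat.gcd_rec, Nat.gcd_comm]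

lemma pow_dvd_of_dvd_sq {p m y : ℕ} (hp : p.Prime) (h : p ^ m ∣ y ^ 2) :
    p ^ ((m + 1) / 2) ∣ y := by
  rcases eq_or_ne y 0 with rfl | hy
  · exact dvd_zero _
  have h2 : m ≤ (y ^ 2).factorization p :=
    (hp.pow_dvd_iff_le_factorization (pow_ne_zero _ hy)).1 h
  rw [Nat.factorization_pow] at h2
  simp only [Finsupp.smul_apply, smul_eq_mul] at h2
  exact (hp.pow_dvd_iff_le_factorization hy).2 (by omega)

lemma y_bound {p e : ℕ} [NeZero (p ^ e)] (hp : p.Prime) (y1 y2 : ZMod (p ^ e)) :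
    Nat.card {x : ZMod (p ^ e) × ZMod (p ^ e) // x.1 * y1 ^ 2 = x.2 * y2 ^ 2}
      ≤ p ^ e * ∑ m ∈ Finset.range (e + 1),
          if p ^ m ∣ y1.val ^ 2 ∧ p ^ m ∣ y2.val ^ 2 then p ^ m else 0 := by
  classical
  obtain ⟨tA, htAe, htA⟩ := (Nat.dvd_prime_pow hp).1
    (Nat.gcd_dvd_right (y1.val ^ 2) (p ^ e))
  obtain ⟨tB, htBe, htB⟩ := (Nat.dvd_prime_pow hp).1
    (Nat.gcd_dvd_right (y2.val ^ 2) (p ^ e))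
  have hA : p ^ tA ∣ y1.val ^ 2 := htA ▸ Nat.gcd_dvd_left _ _
  have hB : p ^ tB ∣ y2.val ^ 2 := htB ▸ Nat.gcd_dvd_left _ _
  rcases le_total tA tB with hle | hle
  · have h1 : Nat.card {x : ZMod (p ^ e) × ZMod (p ^ e) // x.1 * y1 ^ 2 = x.2 * y2 ^ 2}
        ≤ p ^ e * p ^ tA := by
      have := pair_card_le (y1 ^ 2) (y2 ^ 2)
      rwa [gcd_val_sq, htA] at this
    refine h1.trans (Nat.mul_le_mul_left _ ?_)
    have hmem : tA ∈ Finset.range (e + 1) := Finset.mem_range.2 (by omega)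
    have hs := Finset.single_le_sum
      (f := fun m => if p ^ m ∣ y1.val ^ 2 ∧ p ^ m ∣ y2.val ^ 2 then p ^ m else 0)
      (fun i _ => Nat.zero_le _) hmem
    have hB' : p ^ tA ∣ y2.val ^ 2 := (pow_dvd_pow p hle).trans hB
    simpa [hA, hB'] using hs
  · have h1 : Nat.card {x : ZMod (p ^ e) × ZMod (p ^ e) // x.1 * y1 ^ 2 = x.2 * y2 ^ 2}
        ≤ p ^ e * p ^ tB := by
      have := pair_card_le' (y1 ^ 2) (y2 ^ 2)
      rwa [gcd_val_sq, htB] at this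
    refine h1.trans (Nat.mul_le_mul_left _ ?_)
    have hmem : tB ∈ Finset.range (e + 1) := Finset.mem_range.2 (by omega)
    have hs := Finset.single_le_sum
      (f := fun m => if p ^ m ∣ y1.val ^ 2 ∧ p ^ m ∣ y2.val ^ 2 then p ^ m else 0)
      (fun i _ => Nat.zero_le _) hmem
    have hA' : p ^ tB ∣ y1.val ^ 2 := (pow_dvd_pow p hle).trans hA
    simpa [hA', hB] using hs

lemma rho_pp_le (p e : ℕ) (hp : p.Prime) (he : 1 ≤ e) :
    rho (p ^ e) ≤ (e + 1) * p ^ (3 * e) := by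
  classical
  haveI : NeZero (p ^ e) := ⟨pow_ne_zero e hp.ne_zero⟩
  set N := p ^ e with hN
  have e1 : Sol (ZMod N) ≃
      Σ y : ZMod N × ZMod N, {x : ZMod N × ZMod N // x.1 * y.1 ^ 2 = x.2 * y.2 ^ 2} :=
    { toFun := fun q => ⟨(q.1.2.2.1, q.1.2.2.2), (q.1.1, q.1.2.1), q.2⟩
      invFun := fun s => ⟨(s.2.1.1, s.2.1.2, s.1.1, s.1.2), s.2.2⟩
      left_inv := fun q => rfl
      right_inv := fun s => rfl }
  have hrho : rho N = ∑ y : ZMod N × ZMod N,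
      Nat.card {x : ZMod N × ZMod N // x.1 * y.1 ^ 2 = x.2 * y.2 ^ 2} := by
    show Nat.card (Sol (ZMod N)) = _
    rw [Nat.card_congr e1, Nat.card_eq_fintype_card, Fintype.card_sigma]
    exact Finset.sum_congr rfl fun y _ => (Nat.card_eq_fintype_card).symm
  rw [hrho]
  have step1 : ∑ y : ZMod N × ZMod N,
      Nat.card {x : ZMod N × ZMod N // x.1 * y.1 ^ 2 = x.2 * y.2 ^ 2}
      ≤ ∑ y : ZMod N × ZMod N, N * ∑ m ∈ Finset.range (e + 1),
          (if p ^ m ∣ y.1.val ^ 2 ∧ p ^ m ∣ y.2.val ^ 2 then p ^ m else 0) :=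
    Finset.sum_le_sum fun y _ => y_bound hp y.1 y.2
  refine step1.trans ?_
  have step2 : ∀ m ∈ Finset.range (e + 1),
      (∑ y : ZMod N × ZMod N, if p ^ m ∣ y.1.val ^ 2 ∧ p ^ m ∣ y.2.val ^ 2 then p ^ m else 0)
        ≤ p ^ (2 * e) := by
    intro m hm
    have hm' : m ≤ e := Nat.lt_succ_iff.1 (Finset.mem_range.1 hm)
    set c := (m + 1) / 2 with hc
    have hce : c ≤ e := by omega
    set C := (Finset.univ.filter (fun z : ZMod N => p ^ m ∣ z.val ^ 2)).card with hC
    have hCle : C ≤ p ^ (e - c) := by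
      have hdd : p ^ c ∣ N := pow_dvd_pow p hce
      have hfc := filter_card_le (fun z : ZMod N => p ^ m ∣ z.val ^ 2) (p ^ c)
        (pow_pos hp.pos c) hdd (fun y hy => pow_dvd_of_dvd_sq hp hy)
      exact le_trans hfc (le_of_eq (Nat.pow_div hce hp.pos))
    have heq : (∑ y : ZMod N × ZMod N,
        if p ^ m ∣ y.1.val ^ 2 ∧ p ^ m ∣ y.2.val ^ 2 then p ^ m else 0)
        = C * (C * p ^ m) := by
      rw [Fintype.sum_prod_type]
      calc ∑ a : ZMod N, ∑ b : ZMod N,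
            (if p ^ m ∣ a.val ^ 2 ∧ p ^ m ∣ b.val ^ 2 then p ^ m else 0)
          = ∑ a : ZMod N, ∑ b : ZMod N,
              (if p ^ m ∣ a.val ^ 2 then 1 else 0) *
                (if p ^ m ∣ b.val ^ 2 then p ^ m else 0) := by
            refine Finset.sum_congr rfl fun a _ => Finset.sum_congr rfl fun b _ => ?_
            by_cases h1 : p ^ m ∣ a.val ^ 2 <;> by_cases h2 : p ^ m ∣ b.val ^ 2 <;>
              simp [h1, h2]
        _ = (∑ a : ZMod N, if p ^ m ∣ a.val ^ 2 then 1 else 0) *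
              (∑ b : ZMod N, if p ^ m ∣ b.val ^ 2 then p ^ m else 0) :=
            (Finset.sum_mul_sum _ _ _ _).symm
        _ = C * (C * p ^ m) := by
            rw [Finset.sum_boole, Nat.cast_id, ← Finset.sum_filter, Finset.sum_const,
              smul_eq_mul]
    rw [heq]
    calc C * (C * p ^ m) ≤ p ^ (e - c) * (p ^ (e - c) * p ^ m) :=
          Nat.mul_le_mul hCle (Nat.mul_le_mul hCle le_rfl)
      _ = p ^ ((e - c) + ((e - c) + m)) := by rw [← pow_add, ← pow_add]
      _ ≤ p ^ (2 * e) := Nat.pow_le_pow_right hp.pos (by omega)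
  calc ∑ y : ZMod N × ZMod N, N * ∑ m ∈ Finset.range (e + 1),
        (if p ^ m ∣ y.1.val ^ 2 ∧ p ^ m ∣ y.2.val ^ 2 then p ^ m else 0)
      = N * ∑ m ∈ Finset.range (e + 1), ∑ y : ZMod N × ZMod N,
          (if p ^ m ∣ y.1.val ^ 2 ∧ p ^ m ∣ y.2.val ^ 2 then p ^ m else 0) := by
        rw [← Finset.mul_sum, Finset.sum_comm]
    _ ≤ N * ∑ _m ∈ Finset.range (e + 1), p ^ (2 * e) :=
        Nat.mul_le_mul le_rfl (Finset.sum_le_sum step2)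
    _ = (e + 1) * p ^ (3 * e) := by
        rw [Finset.sum_const, Finset.card_range, smul_eq_mul, hN,
          show 3 * e = e + 2 * e by ring, pow_add]
        ring

end RhoAux

theorem stmt_2 :
    (∀ m n : ℕ, 0 < m → 0 < n → Nat.Coprime m n → rho (m * n) = rho m * rho n) ∧
    (∀ p e : ℕ, p.Prime → 1 ≤ e → rho (p ^ e) ≤ (e + 1) * p ^ (3 * e)) := by
  exact ⟨fun m n _ _ h => RhoAux.rho_mul m n h, fun p e hp he => RhoAux.rho_pp_le p e hp he⟩
end

section
/- Let $q$ be a prime power $p^r$ and $b, c$ integers with $p^{\beta} \| b$ where $\beta = v_p(b)$. If the generalized Gauss sum $G(b,c;p^r) = \sum_{x \bmod p^r} e_{p^r}(b x^2 + c x)$ is nonzero, then $p^{\min\{\beta, r\}} \mid c$. -/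
/-- The generalised Gauss sum `G(b, c; q) = ∑_{x mod q} e_q(b x² + c x)`. -/
noncomputable def gaussSumGen (b c : ℤ) (q : ℕ) : ℂ :=
  ∑ x ∈ Finset.range q,
    Complex.exp (2 * Real.pi * Complex.I * ((b * (x : ℤ) ^ 2 + c * (x : ℤ) : ℤ) : ℂ) / (q : ℂ))

/-- Reindexing a sum over `range (a * n)` by `x = y + a * z`. -/
lemma sum_range_mul_reindex (f : ℕ → ℂ) (a n : ℕ) (ha : 0 < a) :
    ∑ x ∈ Finset.range (a * n), f x =
      ∑ z ∈ Finset.range n, ∑ y ∈ Finset.range a, f (y + a * z) := by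
  have key : ∑ x ∈ Finset.range (a * n), f x =
      ∑ zy ∈ Finset.range n ×ˢ Finset.range a, f (zy.2 + a * zy.1) := by
    refine Finset.sum_nbij' (fun x => (x / a, x % a)) (fun zy => zy.2 + a * zy.1)
      ?_ ?_ ?_ ?_ ?_
    · intro x hx
      simp only [Finset.mem_range, Finset.mem_product] at *
      refine ⟨Nat.div_lt_of_lt_mul ?_, Nat.mod_lt _ ha⟩
      omega
    · intro zy hzy
      simp only [Finset.mem_range, Finset.mem_product] at *
      calc zy.2 + a * zy.1 < a + a * zy.1 := by omega
        _ = a * (zy.1 + 1) := by ring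
        _ ≤ a * n := Nat.mul_le_mul_left a (by omega)
    · intro x _
      exact Nat.mod_add_div x a
    · intro zy hzy
      simp only [Finset.mem_range, Finset.mem_product] at hzy
      have h1 : (zy.2 + a * zy.1) / a = zy.1 := by
        rw [Nat.add_mul_div_left _ _ ha, Nat.div_eq_of_lt hzy.2, zero_add]
      have h2 : (zy.2 + a * zy.1) % a = zy.2 := by
        rw [Nat.add_mul_mod_self_left, Nat.mod_eq_of_lt hzy.2]
      show ((zy.2 + a * zy.1) / a, (zy.2 + a * zy.1) % a) = zy
      rw [h1, h2]
    · intro x _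
      rw [Nat.mod_add_div x a]
  rw [key, Finset.sum_product]

theorem stmt_4 (p : ℕ) (hp : p.Prime) (r : ℕ) (b c : ℤ) (hb : b ≠ 0)
    (h : gaussSumGen b c (p ^ r) ≠ 0) :
    (p : ℤ) ^ (min (padicValInt p b) r) ∣ c := by
  haveI : Fact p.Prime := ⟨hp⟩
  set m := min (padicValInt p b) r with hm
  set a : ℕ := p ^ (r - m) with ha
  set n : ℕ := p ^ m with hn
  have hmle : m ≤ r := min_le_right _ _
  have han : a * n = p ^ r := by rw [ha, hn, ← pow_add]; congr 1; omega
  have hapos : 0 < a := pow_pos hp.pos _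
  have hnpos : 0 < n := pow_pos hp.pos m
  have ha0 : (a : ℂ) ≠ 0 := Nat.cast_ne_zero.mpr hapos.ne'
  have hn0 : (n : ℂ) ≠ 0 := Nat.cast_ne_zero.mpr hnpos.ne'
  have hq0 : ((p ^ r : ℕ) : ℂ) ≠ 0 := Nat.cast_ne_zero.mpr (pow_pos hp.pos r).ne'
  -- p^m divides b
  have hpb : (p : ℤ) ^ m ∣ b :=
    dvd_trans (pow_dvd_pow _ (min_le_left _ _)) (padicValInt_dvd b)
  obtain ⟨e, he⟩ := hpb
  set T : ℂ := 2 * Real.pi * Complex.I with hT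
  have hT0 : T ≠ 0 := by
    simp [hT, Real.pi_ne_zero, Complex.I_ne_zero, Complex.ofReal_ne_zero]
  set ζ : ℂ := Complex.exp (T * (c : ℂ) / (n : ℂ)) with hζ
  -- the key factorization of the Gauss sum
  have key : gaussSumGen b c (p ^ r) =
      (∑ y ∈ Finset.range a,
        Complex.exp (T * ((b * (y : ℤ) ^ 2 + c * (y : ℤ) : ℤ) : ℂ) / ((p ^ r : ℕ) : ℂ))) *
      (∑ z ∈ Finset.range n, ζ ^ z) := by
    rw [gaussSumGen, ← han, sum_range_mul_reindex _ a n hapos]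
    have hterm : ∀ y z : ℕ,
        Complex.exp (T * ((b * ((y + a * z : ℕ) : ℤ) ^ 2 + c * ((y + a * z : ℕ) : ℤ) : ℤ) : ℂ)
            / ((a * n : ℕ) : ℂ)) =
        Complex.exp (T * ((b * (y : ℤ) ^ 2 + c * (y : ℤ) : ℤ) : ℂ) / ((p ^ r : ℕ) : ℂ)) *
          ζ ^ z := by
      intro y z
      have hint : (b * ((y + a * z : ℕ) : ℤ) ^ 2 + c * ((y + a * z : ℕ) : ℤ)) =
          (b * (y : ℤ) ^ 2 + c * (y : ℤ)) + c * (a : ℤ) * (z : ℤ)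
            + ((p ^ r : ℕ) : ℤ) * (e * ((z : ℤ) * (2 * (y : ℤ) + (a : ℤ) * (z : ℤ)))) := by
        have hab : (a : ℤ) * b = (p : ℤ) ^ r * e := by
          rw [he, ha]
          push_cast
          rw [← mul_assoc, ← pow_add]
          congr 2
          omega
        push_cast
        linear_combination ((z : ℤ) * (2 * (y : ℤ) + (a : ℤ) * (z : ℤ))) * hab
      rw [hint]
      rw [show ζ ^ z = Complex.exp ((z : ℂ) * (T * (c : ℂ) / (n : ℂ))) from by
        rw [hζ, ← Complex.exp_nat_mul], ← Complex.exp_add]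
      rw [Complex.exp_eq_exp_iff_exists_int]
      refine ⟨e * ((z : ℤ) * (2 * (y : ℤ) + (a : ℤ) * (z : ℤ))), ?_⟩
      have hq : (a : ℂ) * (n : ℂ) = (p : ℂ) ^ r := by
        rw [ha, hn]
        push_cast
        rw [← pow_add]
        congr 1
        omega
      push_cast
      rw [← hq]
      field_simp [hT]
      ring
    calc ∑ z ∈ Finset.range n, ∑ y ∈ Finset.range a,
          Complex.exp (T * ((b * ((y + a * z : ℕ) : ℤ) ^ 2 + c * ((y + a * z : ℕ) : ℤ) : ℤ) : ℂ)
            / ((a * n : ℕ) : ℂ))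
        = ∑ z ∈ Finset.range n, ∑ y ∈ Finset.range a,
            Complex.exp (T * ((b * (y : ℤ) ^ 2 + c * (y : ℤ) : ℤ) : ℂ) / ((p ^ r : ℕ) : ℂ))
              * ζ ^ z := by
          refine Finset.sum_congr rfl fun z _ => Finset.sum_congr rfl fun y _ => ?_
          exact hterm y z
      _ = _ := by
          rw [Finset.sum_comm]
          rw [← Finset.sum_mul_sum, han]
  -- the geometric factor is nonzero
  have hgeo : (∑ z ∈ Finset.range n, ζ ^ z) ≠ 0 := by
    intro h0
    apply h
    rw [key, h0, mul_zero]
  -- ζ^n = 1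
  have hζn : ζ ^ n = 1 := by
    rw [hζ, ← Complex.exp_nat_mul]
    have : (n : ℂ) * (T * (c : ℂ) / (n : ℂ)) = (c : ℤ) * (2 * Real.pi * Complex.I) := by
      field_simp [hT]
      ring
    rw [this, Complex.exp_int_mul_two_pi_mul_I]
  -- hence ζ = 1
  have hζ1 : ζ = 1 := by
    by_contra hne
    apply hgeo
    rw [geom_sum_eq hne, hζn, sub_self, zero_div]
  -- extract divisibility
  rw [hζ, Complex.exp_eq_one_iff] at hζ1
  obtain ⟨k, hk⟩ := hζ1
  have hc : (c : ℂ) = (k : ℂ) * (n : ℂ) := by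
    have h1 : T * (c : ℂ) = (k : ℂ) * T * (n : ℂ) := by
      field_simp [hT] at hk ⊢
      have hck : (c : ℂ) = (n : ℂ) * (k : ℂ) := mul_left_cancel₀ hT0 (by rw [hk, hT]; ring)
      rw [hck]
    have h2 : T * (c : ℂ) = T * ((k : ℂ) * (n : ℂ)) := by rw [h1]; ring
    exact mul_left_cancel₀ hT0 h2
  have hcz : c = k * (n : ℤ) := by
    exact_mod_cast hc
  rw [hn] at hcz
  exact ⟨k, by push_cast at hcz ⊢; linarith [hcz]⟩
end

section
/- With $\psi$ as defined (supported on squares, $\psi(p^{2k}) = \phi(p^{2k}) p^{12k}(1-p^{-4})$, $\psi(p^{2k+1}) = 0$), the Dirichlet-type series identity $\sum_{q=1}^{\infty} q^{-8} \psi(q) \prod_{p \mid q}(1 - p^{-4})^{-1} = \zeta(2)/\zeta(3)$ holds. -/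
open Complex LSeries Nat Finset
open scoped LSeries.notation

private lemma one_sub_pow_ne (p : ℕ) (hp : p.Prime) : (1 : ℂ) - (p : ℂ) ^ (-4 : ℤ) ≠ 0 := by
  have h1 : ‖(p : ℂ) ^ (-4 : ℤ)‖ < 1 := by
    rw [norm_zpow, Complex.norm_natCast]
    have hp1 : (1 : ℝ) < (p : ℝ) := by exact_mod_cast hp.one_lt
    rw [zpow_neg, show ((4 : ℤ)) = ((4 : ℕ) : ℤ) by norm_num, zpow_natCast]
    rw [inv_lt_one_iff₀]
    right
    exact one_lt_pow₀ hp1 (by norm_num)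
  intro h
  rw [sub_eq_zero] at h
  rw [← h] at h1
  simp at h1

private lemma totient_prod_aux (n : ℕ) (hn : n ≠ 0) :
    ∏ p ∈ n.primeFactors,
      (Nat.totient (p ^ (2 * n.factorization p)) * p ^ (12 * n.factorization p)) =
      Nat.totient n * n ^ 13 := by
  have h13 : n ^ 13 = ∏ p ∈ n.primeFactors, p ^ (13 * n.factorization p) := by
    conv_lhs => rw [← Nat.factorization_prod_pow_eq_self hn]
    rw [Finsupp.prod, Nat.support_factorization, ← Finset.prod_pow]
    exact Finset.prod_congr rfl fun p _ ↦ by rw [← pow_mul, mul_comm]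
  rw [Nat.totient_eq_prod_factorization hn, Finsupp.prod, Nat.support_factorization, h13,
    ← Finset.prod_mul_distrib]
  refine Finset.prod_congr rfl fun p hp ↦ ?_
  have hp' := Nat.prime_of_mem_primeFactors hp
  have hk : n.factorization p ≠ 0 :=
    Finsupp.mem_support_iff.mp (by rwa [Nat.support_factorization])
  obtain ⟨j, hj⟩ : ∃ j, n.factorization p = j + 1 := ⟨n.factorization p - 1, by omega⟩
  rw [hj]
  rw [Nat.totient_prime_pow hp' (by positivity)]
  have h2 : 2 * (j + 1) - 1 = 2 * j + 1 := by omega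
  have h3 : (j + 1) - 1 = j := by omega
  rw [h2, h3]
  ring

private lemma psi_square (ψ : ℕ → ℂ)
    (h1 : ψ 1 = 1)
    (hmul : ∀ m n : ℕ, Nat.Coprime m n → ψ (m * n) = ψ m * ψ n)
    (heven : ∀ p : ℕ, p.Prime → ∀ k : ℕ, 1 ≤ k →
      ψ (p ^ (2 * k)) =
        (Nat.totient (p ^ (2 * k)) : ℂ) * (p : ℂ) ^ (12 * k) * (1 - (p : ℂ) ^ (-4 : ℤ)))
    (n : ℕ) (hn : n ≠ 0) :
    ((n ^ 2 : ℕ) : ℂ) ^ (-8 : ℤ) * ψ (n ^ 2) *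
      ∏ p ∈ (n ^ 2 : ℕ).primeFactors, (1 - (p : ℂ) ^ (-4 : ℤ))⁻¹ =
      (Nat.totient n : ℂ) * ((n : ℂ)) ^ (-3 : ℤ) := by
  have hn2 : n ^ 2 ≠ 0 := pow_ne_zero 2 hn
  have hψ : ψ (n ^ 2) = ∏ p ∈ n.primeFactors, ψ (p ^ (2 * n.factorization p)) := by
    rw [Nat.multiplicative_factorization ψ hmul h1 hn2, Nat.factorization_pow, Finsupp.prod]
    rw [Finsupp.support_smul_eq two_ne_zero, Nat.support_factorization]
    exact Finset.prod_congr rfl fun p hp ↦ by simp [Finsupp.smul_apply]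
  have hψ2 : ψ (n ^ 2) = ∏ p ∈ n.primeFactors,
      ((Nat.totient (p ^ (2 * n.factorization p)) : ℂ) * (p : ℂ) ^ (12 * n.factorization p) *
        (1 - (p : ℂ) ^ (-4 : ℤ))) := by
    rw [hψ]
    refine Finset.prod_congr rfl fun p hp ↦ ?_
    have hk : 1 ≤ n.factorization p := by
      have := Nat.Prime.factorization_pos_of_dvd (Nat.prime_of_mem_primeFactors hp) hn
        (Nat.dvd_of_mem_primeFactors hp)
      omega
    exact heven p (Nat.prime_of_mem_primeFactors hp) _ hk
  rw [Nat.primeFactors_pow n two_ne_zero, hψ2]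
  rw [Finset.prod_mul_distrib, mul_assoc, mul_assoc, ← Finset.prod_mul_distrib]
  have hcancel : ∏ p ∈ n.primeFactors,
      ((1 - (p : ℂ) ^ (-4 : ℤ)) * (1 - (p : ℂ) ^ (-4 : ℤ))⁻¹) = 1 := by
    refine Finset.prod_eq_one fun p hp ↦
      mul_inv_cancel₀ (one_sub_pow_ne p (Nat.prime_of_mem_primeFactors hp))
  rw [hcancel, mul_one]
  have hprod : ∏ p ∈ n.primeFactors,
      ((Nat.totient (p ^ (2 * n.factorization p)) : ℂ) * (p : ℂ) ^ (12 * n.factorization p)) =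
      ((Nat.totient n * n ^ 13 : ℕ) : ℂ) := by
    rw [← totient_prod_aux n hn]
    push_cast
    rfl
  rw [hprod]
  have hx : (n : ℂ) ≠ 0 := Nat.cast_ne_zero.mpr hn
  push_cast
  rw [zpow_neg, zpow_neg]
  rw [show ((8 : ℤ)) = ((8 : ℕ) : ℤ) by norm_num, show ((3 : ℤ)) = ((3 : ℕ) : ℤ) by norm_num,
    zpow_natCast, zpow_natCast]
  field_simp

private lemma totient_hasSum :
    HasSum (fun m : ℕ+ ↦ (Nat.totient (m : ℕ) : ℂ) * ((m : ℕ) : ℂ) ^ (-3 : ℤ))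
      (riemannZeta 2 / riemannZeta 3) := by
  set f : ℕ → ℂ := fun n ↦ (Nat.totient n : ℂ) with hf_def
  have hre3 : (1 : ℝ) < (3 : ℂ).re := by norm_num
  have hf : LSeriesSummable f 3 := by
    refine LSeriesSummable_of_le_const_mul_rpow (x := 2) (by norm_num) ⟨1, fun n hn ↦ ?_⟩
    rw [one_mul, show (2 : ℝ) - 1 = 1 by norm_num, Real.rpow_one]
    simpa [hf_def] using (show ((Nat.totient n : ℝ)) ≤ n by exact_mod_cast Nat.totient_le n)
  have h1s : LSeriesSummable 1 3 := LSeriesSummable_one_iff.mpr hre3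
  have hconv : f ⍟ 1 = fun n : ℕ ↦ (n : ℂ) := by
    funext n
    rw [LSeries.convolution_def]
    rcases eq_or_ne n 0 with rfl | hn
    · simp
    · simp only [Pi.one_apply, mul_one]
      rw [Nat.sum_divisorsAntidiagonal (f := fun x _ ↦ (Nat.totient x : ℂ))]
      rw [← Nat.cast_sum]
      rw [Nat.sum_totient]
  have hterm : ∀ m, term (fun k ↦ (k : ℂ)) 3 m = term 1 2 m := by
    intro m
    rcases eq_or_ne m 0 with rfl | hm
    · simp
    · rw [term_of_ne_zero hm, term_of_ne_zero hm, Pi.one_apply]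
      have hc : (m : ℂ) ≠ 0 := Nat.cast_ne_zero.mpr hm
      rw [show (3 : ℂ) = 1 + 2 by norm_num, cpow_add _ _ hc, cpow_one]
      have hc2 : (m : ℂ) ^ (2 : ℂ) ≠ 0 := by
        rw [show (2 : ℂ) = ((2 : ℕ) : ℂ) by norm_num, cpow_natCast]
        exact pow_ne_zero 2 hc
      field_simp
  have hL : L f 3 * L 1 3 = riemannZeta 2 := by
    rw [← LSeries_convolution' hf h1s, hconv]
    have : L (fun n : ℕ ↦ (n : ℂ)) 3 = L 1 2 := tsum_congr hterm
    rw [this, LSeries_one_eq_riemannZeta (by norm_num)]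
  have hz3 : L 1 3 = riemannZeta 3 := LSeries_one_eq_riemannZeta hre3
  have hne : riemannZeta 3 ≠ 0 := riemannZeta_ne_zero_of_one_lt_re (by norm_num)
  have hLf : L f 3 = riemannZeta 2 / riemannZeta 3 := by
    rw [eq_div_iff hne, ← hz3]; exact hL
  have hsum : HasSum (term f 3) (riemannZeta 2 / riemannZeta 3) := hLf ▸ hf.hasSum
  have hrange : ∀ x : ℕ, x ∉ Set.range (fun m : ℕ+ ↦ (m : ℕ)) → term f 3 x = 0 := by
    intro x hx
    rcases eq_or_ne x 0 with rfl | hx0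
    · simp
    · exact absurd ⟨⟨x, Nat.pos_of_ne_zero hx0⟩, rfl⟩ hx
  have key := (Function.Injective.hasSum_iff (f := term f 3)
    (fun a b h ↦ PNat.coe_injective h) hrange).mpr hsum
  have hfun : (term f 3 ∘ fun m : ℕ+ ↦ (m : ℕ)) =
      fun m : ℕ+ ↦ (Nat.totient (m : ℕ) : ℂ) * ((m : ℕ) : ℂ) ^ (-3 : ℤ) := by
    funext m
    have hm : (m : ℕ) ≠ 0 := m.pos.ne'
    simp only [Function.comp_apply]
    rw [term_of_ne_zero hm]
    rw [show (3 : ℂ) = ((3 : ℕ) : ℂ) by norm_num, cpow_natCast, div_eq_mul_inv]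
    congr 1
  exact hfun ▸ key

theorem stmt_9 (ψ : ℕ → ℂ)
    (h1 : ψ 1 = 1)
    (hmul : ∀ m n : ℕ, Nat.Coprime m n → ψ (m * n) = ψ m * ψ n)
    (heven : ∀ p : ℕ, p.Prime → ∀ k : ℕ, 1 ≤ k →
      ψ (p ^ (2 * k)) =
        (Nat.totient (p ^ (2 * k)) : ℂ) * (p : ℂ) ^ (12 * k) * (1 - (p : ℂ) ^ (-4 : ℤ)))
    (hodd : ∀ p : ℕ, p.Prime → ∀ k : ℕ, ψ (p ^ (2 * k + 1)) = 0) :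
    HasSum
      (fun q : ℕ+ =>
        ((q : ℕ) : ℂ) ^ (-8 : ℤ) * ψ q *
          ∏ p ∈ (q : ℕ).primeFactors, (1 - (p : ℂ) ^ (-4 : ℤ))⁻¹)
      (riemannZeta 2 / riemannZeta 3) := by
  set F : ℕ+ → ℂ := fun q : ℕ+ ↦
    ((q : ℕ) : ℂ) ^ (-8 : ℤ) * ψ q *
      ∏ p ∈ (q : ℕ).primeFactors, (1 - (p : ℂ) ^ (-4 : ℤ))⁻¹ with hF
  set j : ℕ+ → ℕ+ := fun m ↦ m * m with hj
  have hinj : Function.Injective j := by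
    intro a b h
    have h' : (a : ℕ) * a = (b : ℕ) * b := by
      have := congrArg (fun x : ℕ+ ↦ (x : ℕ)) h
      simpa [hj] using this
    exact PNat.coe_injective (Nat.mul_self_inj.mp h')
  have hzero : ∀ q : ℕ+, q ∉ Set.range j → F q = 0 := by
    intro q hq
    have hq0 : (q : ℕ) ≠ 0 := q.pos.ne'
    have hψq : ψ q = 0 := by
      by_contra hne
      have hfac := Nat.multiplicative_factorization ψ hmul h1 hq0
      have hall : ∀ p ∈ (q : ℕ).factorization.support, Even ((q : ℕ).factorization p) := by
        intro p hp
        by_contra hodd'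
        rw [Nat.not_even_iff_odd] at hodd'
        obtain ⟨k, hk⟩ := hodd'
        have : ψ (p ^ ((q : ℕ).factorization p)) = 0 := by
          rw [hk]; exact hodd p (Nat.prime_of_mem_primeFactors (by rwa [← Nat.support_factorization])) k
        exact hne (by rw [hfac, Finsupp.prod]; exact Finset.prod_eq_zero hp this)
      set r : ℕ := ∏ p ∈ (q : ℕ).factorization.support, p ^ ((q : ℕ).factorization p / 2) with hr
      have hrr : r * r = (q : ℕ) := by
        rw [hr, ← Finset.prod_mul_distrib]
        have : ∀ p ∈ (q : ℕ).factorization.support,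
            p ^ ((q : ℕ).factorization p / 2) * p ^ ((q : ℕ).factorization p / 2) =
            p ^ ((q : ℕ).factorization p) := by
          intro p hp
          rw [← pow_add]
          congr 1
          obtain ⟨c, hc⟩ := hall p hp
          omega
        rw [Finset.prod_congr rfl this]
        exact Nat.factorization_prod_pow_eq_self hq0
      have hrpos : 0 < r := by
        rw [hr]
        refine Finset.prod_pos fun p hp ↦ pow_pos ?_ _
        exact (Nat.prime_of_mem_primeFactors (by rwa [← Nat.support_factorization])).pos
      exact hq ⟨⟨r, hrpos⟩, PNat.coe_injective (by simp only [hj, PNat.mul_coe, PNat.mk_coe]; exact hrr)⟩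
    simp [hF, hψq]
  have hFj : (F ∘ j) = fun m : ℕ+ ↦ (Nat.totient (m : ℕ) : ℂ) * ((m : ℕ) : ℂ) ^ (-3 : ℤ) := by
    funext m
    have hm : (m : ℕ) ≠ 0 := m.pos.ne'
    have hcoe : ((j m : ℕ+) : ℕ) = (m : ℕ) ^ 2 := by simp [hj, sq]
    simp only [Function.comp_apply, hF, hcoe]
    exact psi_square ψ h1 hmul heven (m : ℕ) hm
  exact (Function.Injective.hasSum_iff hinj hzero).mp (hFj ▸ totient_hasSum)
end

section
/- Let $n(p^t)$ denote the number of pairs $(\mathbf{x}, \mathbf{y}) \in (\mathbb{Z}/p^t\mathbb{Z})^8$ with $x_1 y_1^2 + x_2 y_2^2 + x_3 y_3^2 + x_4 y_4^2 \equiv 0 \pmod{p^t}$. Then $n(p^t) = (1 + p^{-2}) p^{7t} + O(p^{6t})$, and in particular $\lim_{t \to \infty} p^{-7t} n(p^t) = 1 + p^{-2}$. -/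
open Finset

namespace Stmt17

/-- Fibers of a surjective additive hom between finite groups all have size `|G|/|H|`. -/
lemma fiber_card {G H : Type*} [AddCommGroup G] [AddCommGroup H] [Fintype G] [Fintype H]
    [DecidableEq G] [DecidableEq H] (f : G →+ H) (hf : Function.Surjective f) (b : H) :
    (univ.filter fun a => f a = b).card * Fintype.card H = Fintype.card G := by
  have key : ∀ c : H, (univ.filter fun a => f a = c).card
      = (univ.filter fun a => f a = 0).card := by
    intro c
    obtain ⟨a0, ha0⟩ := hf c
    refine card_nbij' (fun a => a - a0) (fun a => a + a0) ?_ ?_ ?_ ?_ <;>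
      intro a ha <;>
      simp only [mem_coe, mem_filter, mem_univ, true_and, map_sub, map_add] at * <;>
      simp [ha, ha0, sub_eq_zero]
  have h2 : Fintype.card G = ∑ c : H, (univ.filter fun a => f a = c).card := by
    rw [← card_univ]
    exact card_eq_sum_card_fiberwise fun x _ => mem_univ _
  rw [key b, h2]
  simp only [key]
  rw [Finset.sum_const, card_univ, smul_eq_mul, mul_comm]

/-- If some `y i` is a unit, the linear congruence has `q^3` solutions. -/
lemma solcount (q : ℕ) [NeZero q] (y : Fin 4 → ZMod q) (i : Fin 4) (hy : IsUnit (y i)) :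
    (univ.filter fun x : Fin 4 → ZMod q => ∑ j, x j * (y j) ^ 2 = 0).card = q ^ 3 := by
  set f : (Fin 4 → ZMod q) →+ ZMod q :=
    AddMonoidHom.mk' (fun x => ∑ j, x j * (y j) ^ 2)
      (by intro a b; simp [add_mul, Finset.sum_add_distrib]) with hfdef
  have hsurj : Function.Surjective f := by
    intro c
    refine ⟨Pi.single i ((↑hy.unit⁻¹ : ZMod q) ^ 2 * c), ?_⟩
    have h1 : (↑hy.unit⁻¹ : ZMod q) * y i = 1 := hy.val_inv_mul
    have h2 : ∀ j, (Pi.single i ((↑hy.unit⁻¹ : ZMod q) ^ 2 * c) : Fin 4 → ZMod q) j * (y j) ^ 2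
        = if j = i then ((↑hy.unit⁻¹ : ZMod q) ^ 2 * c) * (y i) ^ 2 else 0 := by
      intro j
      by_cases h : j = i
      · subst h; simp
      · simp [Pi.single_eq_of_ne h, if_neg h]
    show (∑ j, (Pi.single i ((↑hy.unit⁻¹ : ZMod q) ^ 2 * c) : Fin 4 → ZMod q) j * (y j) ^ 2) = c
    rw [Finset.sum_congr rfl fun j _ => h2 j, Finset.sum_ite_eq' univ i, if_pos (mem_univ i)]
    calc (↑hy.unit⁻¹ : ZMod q) ^ 2 * c * (y i) ^ 2
        = ((↑hy.unit⁻¹ : ZMod q) * y i) ^ 2 * c := by ring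
      _ = c := by rw [h1]; ring
  have := fiber_card f hsurj 0
  have hcards : Fintype.card (Fin 4 → ZMod q) = q ^ 4 := by
    simp [ZMod.card]
  rw [hcards, ZMod.card] at this
  have hq : 0 < q := Nat.pos_of_ne_zero (NeZero.ne q)
  have : (univ.filter fun x : Fin 4 → ZMod q => f x = 0).card * q = q ^ 3 * q := by
    rw [this]; ring
  have := Nat.eq_of_mul_eq_mul_right hq this
  simpa [hfdef] using this


section Prime
variable {p : ℕ} [NeZero p] (hp : p.Prime)
include hp

lemma val_p_mul (m : ℕ) (u : ZMod (p ^ m)) :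
    ((p * u.val : ℕ) : ZMod (p ^ (m + 1))).val = p * u.val := by
  apply ZMod.val_cast_of_lt
  have h1 : u.val < p ^ m := ZMod.val_lt u
  calc p * u.val < p * p ^ m := by
        exact Nat.mul_lt_mul_of_pos_left h1 hp.pos
    _ = p ^ (m + 1) := by ring

lemma down_up (m : ℕ) (x : ZMod (p ^ (m + 1))) :
    ((x.val / p : ℕ) : ZMod (p ^ m)).val = x.val / p := by
  apply ZMod.val_cast_of_lt
  have h1 : x.val < p ^ (m + 1) := ZMod.val_lt x
  rw [Nat.div_lt_iff_lt_mul hp.pos]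
  calc x.val < p ^ (m + 1) := h1
    _ = p ^ m * p := by ring

lemma up_down (m : ℕ) (x : ZMod (p ^ (m + 1))) (hx : p ∣ x.val) :
    ((p * (((x.val / p : ℕ) : ZMod (p ^ m))).val : ℕ) : ZMod (p ^ (m + 1))) = x := by
  rw [down_up hp, Nat.mul_div_cancel' hx, ZMod.natCast_zmod_val]

lemma down_up' (m : ℕ) (u : ZMod (p ^ m)) :
    ((((p * u.val : ℕ) : ZMod (p ^ (m + 1))).val / p : ℕ) : ZMod (p ^ m)) = u := by
  rw [val_p_mul hp, Nat.mul_div_cancel_left _ hp.pos, ZMod.natCast_zmod_val]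

/-- Count of 4-tuples with all coordinates divisible by `p`. -/
lemma card_divisible_tuples (m : ℕ) :
    (univ.filter fun y : Fin 4 → ZMod (p ^ (m + 1)) => ∀ i, p ∣ (y i).val).card
      = (p ^ m) ^ 4 := by
  have := card_nbij'
    (s := univ.filter fun y : Fin 4 → ZMod (p ^ (m + 1)) => ∀ i, p ∣ (y i).val)
    (t := (univ : Finset (Fin 4 → ZMod (p ^ m))))
    (fun y i => ((y i).val / p : ℕ)) (fun u i => ((p * (u i).val : ℕ) : ZMod (p ^ (m + 1))))
    (fun y _ => mem_univ _)
    (by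
      intro u _
      simp only [mem_coe, mem_filter, mem_univ, true_and]
      intro i
      exact ⟨(u i).val, val_p_mul hp m (u i)⟩)
    (by
      intro y hy
      simp only [mem_coe, mem_filter, mem_univ, true_and] at hy
      funext i
      exact up_down hp m (y i) (hy i))
    (by
      intro u _
      funext i
      exact down_up' hp m (u i))
  refine this.trans ?_
  rw [card_univ]
  simp [ZMod.card]

/-- The "unit" part of the count. -/
lemma card_unit_part (m : ℕ) :
    (univ.filter fun z : (Fin 4 → ZMod (p ^ (m + 1))) × (Fin 4 → ZMod (p ^ (m + 1))) =>
        (∑ i, z.1 i * (z.2 i) ^ 2 = 0) ∧ ¬(∀ i, p ∣ (z.2 i).val)).card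
      = (p ^ (4 * (m + 1)) - p ^ (4 * m)) * p ^ (3 * (m + 1)) := by
  have hmap : ∀ z ∈ (univ.filter fun z : (Fin 4 → ZMod (p ^ (m + 1))) × (Fin 4 → ZMod (p ^ (m + 1))) =>
        (∑ i, z.1 i * (z.2 i) ^ 2 = 0) ∧ ¬(∀ i, p ∣ (z.2 i).val)),
      z.2 ∈ (univ.filter fun y : Fin 4 → ZMod (p ^ (m + 1)) => ¬(∀ i, p ∣ (y i).val)) := by
    intro z hz
    simp only [mem_filter, mem_univ, true_and] at hz ⊢
    exact hz.2
  rw [card_eq_sum_card_fiberwise hmap]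
  have hfib : ∀ y ∈ (univ.filter fun y : Fin 4 → ZMod (p ^ (m + 1)) => ¬(∀ i, p ∣ (y i).val)),
      ((univ.filter fun z : (Fin 4 → ZMod (p ^ (m + 1))) × (Fin 4 → ZMod (p ^ (m + 1))) =>
        (∑ i, z.1 i * (z.2 i) ^ 2 = 0) ∧ ¬(∀ i, p ∣ (z.2 i).val)).filter
          fun z => z.2 = y).card = (p ^ (m + 1)) ^ 3 := by
    intro y hy
    simp only [mem_filter, mem_univ, true_and] at hy
    push_neg at hy
    obtain ⟨i, hi⟩ := hy
    have hunit : IsUnit (y i) := by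
      rw [← ZMod.natCast_zmod_val (y i), ZMod.isUnit_iff_coprime]
      exact Nat.Coprime.pow_right _ ((hp.coprime_iff_not_dvd.mpr hi).symm)
    rw [← solcount (p ^ (m + 1)) y i hunit]
    refine card_nbij' (fun z => z.1) (fun x => (x, y)) ?_ ?_ ?_ ?_
    · intro z hz
      simp only [mem_coe, mem_filter, mem_univ, true_and] at hz ⊢
      obtain ⟨⟨h1, _⟩, h3⟩ := hz
      rw [← h3]; exact h1
    · intro x hx
      simp only [mem_coe, mem_filter, mem_univ, true_and] at hx ⊢
      refine ⟨⟨hx, ?_⟩, trivial⟩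
      push_neg
      exact ⟨i, hi⟩
    · intro z hz
      simp only [mem_coe, mem_filter, mem_univ, true_and] at hz
      rw [← hz.2]
    · intro x _
      rfl
  have hYcard : (univ.filter fun y : Fin 4 → ZMod (p ^ (m + 1)) => ¬(∀ i, p ∣ (y i).val)).card
      = p ^ (4 * (m + 1)) - p ^ (4 * m) := by
    have hsplit := Finset.card_filter_add_card_filter_not
      (s := (univ : Finset (Fin 4 → ZMod (p ^ (m + 1)))))
      (p := fun y => ∀ i, p ∣ (y i).val)
    have huniv : (univ : Finset (Fin 4 → ZMod (p ^ (m + 1)))).card = p ^ (4 * (m + 1)) := by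
      rw [card_univ]
      simp [ZMod.card, ← pow_mul, mul_comm]
    have hdivc := card_divisible_tuples hp m
    have hdivc' : (univ.filter fun y : Fin 4 → ZMod (p ^ (m + 1)) => ∀ i, p ∣ (y i).val).card
        = p ^ (4 * m) := by rw [hdivc, ← pow_mul, mul_comm m 4]
    rw [hdivc', huniv] at hsplit
    clear hmap hfib hdivc hdivc' huniv
    generalize (univ.filter fun y : Fin 4 → ZMod (p ^ (m + 1)) => ¬(∀ i, p ∣ (y i).val)).card = Y at *
    omega
  rw [Finset.sum_congr rfl hfib, Finset.sum_const, smul_eq_mul, hYcard]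
  congr 1
  rw [← pow_mul, Nat.mul_comm]

omit [NeZero p] hp in
lemma valcast_eq {a b : ℕ} (h : a ∣ b) [NeZero b] (z : ZMod b) :
    ((z.val : ℕ) : ZMod a) = ZMod.castHom h (ZMod a) z := by
  rw [ZMod.castHom_apply, ZMod.natCast_val]

lemma key0 (t : ℕ) (w : ZMod (p ^ (t + 2))) :
    ((p : ZMod (p ^ (t + 2))) ^ 2 * w = 0) ↔ ((w.val : ZMod (p ^ t)) = 0) := by
  conv_lhs => rw [← ZMod.natCast_zmod_val w]
  have hcast : (p : ZMod (p ^ (t + 2))) ^ 2 * ((w.val : ℕ) : ZMod (p ^ (t + 2)))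
      = ((p ^ 2 * w.val : ℕ) : ZMod (p ^ (t + 2))) := by push_cast; ring
  rw [hcast, ZMod.natCast_eq_zero_iff, ZMod.natCast_eq_zero_iff]
  constructor
  · intro h
    have h2 : p ^ 2 * p ^ t ∣ p ^ 2 * w.val := by
      rw [← pow_add]
      have : 2 + t = t + 2 := by ring
      rw [this]; exact h
    exact (Nat.mul_dvd_mul_iff_left (pow_pos hp.pos 2)).mp h2
  · intro h
    have h3 : p ^ (t + 2) = p ^ 2 * p ^ t := by rw [← pow_add]; congr 1; ring
    exact Dvd.dvd.trans (dvd_of_eq h3) (Nat.mul_dvd_mul_left _ h)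

lemma eqn_iff (t : ℕ) (x y : Fin 4 → ZMod (p ^ (t + 2))) (hy : ∀ i, p ∣ (y i).val) :
    (∑ i, x i * (y i) ^ 2 = 0) ↔
    (∑ i, (((x i).val : ℕ) : ZMod (p ^ t)) * ((((y i).val / p : ℕ)) : ZMod (p ^ t)) ^ 2 = 0) := by
  have hdvd : p ^ t ∣ p ^ (t + 2) := pow_dvd_pow p (by omega)
  have hrw : ∀ i, y i = ((p * ((y i).val / p) : ℕ) : ZMod (p ^ (t + 2))) := fun i => by
    rw [Nat.mul_div_cancel' (hy i), ZMod.natCast_zmod_val]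
  have hsum : ∑ i, x i * (y i) ^ 2
      = (p : ZMod (p ^ (t + 2))) ^ 2
        * ∑ i, x i * (((y i).val / p : ℕ) : ZMod (p ^ (t + 2))) ^ 2 := by
    rw [Finset.mul_sum]
    refine Finset.sum_congr rfl fun i _ => ?_
    conv_lhs => rw [hrw i]
    push_cast
    ring
  rw [hsum, key0 hp t]
  rw [valcast_eq hdvd]
  rw [map_sum]
  have hterm : ∀ i, ZMod.castHom hdvd (ZMod (p ^ t))
        (x i * (((y i).val / p : ℕ) : ZMod (p ^ (t + 2))) ^ 2)
      = (((x i).val : ℕ) : ZMod (p ^ t)) * ((((y i).val / p : ℕ)) : ZMod (p ^ t)) ^ 2 := by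
    intro i
    rw [map_mul, map_pow, map_natCast, valcast_eq hdvd]
  rw [Finset.sum_congr rfl fun i _ => hterm i]

end Prime

def downF (p t : ℕ) :
    ((Fin 4 → ZMod (p ^ (t + 2))) × (Fin 4 → ZMod (p ^ (t + 1)))) →+
      ((Fin 4 → ZMod (p ^ t)) × (Fin 4 → ZMod (p ^ t))) :=
  AddMonoidHom.mk'
    (fun w => (fun i => ZMod.castHom (pow_dvd_pow p (Nat.le_add_right t 2)) (ZMod (p ^ t)) (w.1 i),
               fun i => ZMod.castHom (pow_dvd_pow p (Nat.le_add_right t 1)) (ZMod (p ^ t)) (w.2 i)))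
    (by
      intro a b
      refine Prod.ext ?_ ?_ <;> funext i <;>
        simp only [Prod.fst_add, Prod.snd_add, Pi.add_apply, map_add])

section Prime2
variable {p : ℕ} [NeZero p]

lemma downF_apply (t : ℕ) (w : (Fin 4 → ZMod (p ^ (t + 2))) × (Fin 4 → ZMod (p ^ (t + 1)))) :
    downF p t w = (fun i => (((w.1 i).val : ℕ) : ZMod (p ^ t)),
                   fun i => (((w.2 i).val : ℕ) : ZMod (p ^ t))) := by
  refine Prod.ext ?_ ?_ <;> funext i <;>
    simp [downF, AddMonoidHom.mk'_apply, valcast_eq]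

lemma downF_surj (t : ℕ) : Function.Surjective (downF p t) := by
  rintro ⟨a, b⟩
  refine ⟨(fun i => (((a i).val : ℕ) : ZMod (p ^ (t + 2))),
           fun i => (((b i).val : ℕ) : ZMod (p ^ (t + 1)))), ?_⟩
  refine Prod.ext ?_ ?_ <;> funext i <;>
    simp only [downF, AddMonoidHom.mk'_apply] <;>
    rw [map_natCast, ZMod.natCast_zmod_val]

end Prime2

section Prime3
variable {p : ℕ} [NeZero p] (hp : p.Prime)
include hp

lemma card_div_part (t : ℕ) :
    (univ.filter fun z : (Fin 4 → ZMod (p ^ (t + 2))) × (Fin 4 → ZMod (p ^ (t + 2))) =>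
        (∑ i, z.1 i * (z.2 i) ^ 2 = 0) ∧ (∀ i, p ∣ (z.2 i).val)).card
    = p ^ 12 * (univ.filter fun z : (Fin 4 → ZMod (p ^ t)) × (Fin 4 → ZMod (p ^ t)) =>
        ∑ i, z.1 i * (z.2 i) ^ 2 = 0).card := by
  have step1 :
      (univ.filter fun z : (Fin 4 → ZMod (p ^ (t + 2))) × (Fin 4 → ZMod (p ^ (t + 2))) =>
        (∑ i, z.1 i * (z.2 i) ^ 2 = 0) ∧ (∀ i, p ∣ (z.2 i).val)).card
      = (univ.filter fun w : (Fin 4 → ZMod (p ^ (t + 2))) × (Fin 4 → ZMod (p ^ (t + 1))) =>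
          ∑ i, (((w.1 i).val : ℕ) : ZMod (p ^ t))
              * (((w.2 i).val : ℕ) : ZMod (p ^ t)) ^ 2 = 0).card := by
    refine card_nbij'
      (fun z => (z.1, fun i => ((((z.2 i).val / p : ℕ)) : ZMod (p ^ (t + 1)))))
      (fun w => (w.1, fun i => ((p * ((w.2 i).val) : ℕ) : ZMod (p ^ (t + 2)))))
      ?_ ?_ ?_ ?_
    · intro z hz
      simp only [mem_coe, mem_filter, mem_univ, true_and] at hz ⊢
      obtain ⟨h1, h2⟩ := hz
      have := (eqn_iff hp t z.1 z.2 h2).mp h1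
      have hval : ∀ i, (((((z.2 i).val / p : ℕ)) : ZMod (p ^ (t + 1)))).val
          = (z.2 i).val / p := fun i => down_up hp (t + 1) (z.2 i)
      calc ∑ i, (((z.1 i).val : ℕ) : ZMod (p ^ t))
              * ((((((z.2 i).val / p : ℕ)) : ZMod (p ^ (t + 1)))).val : ZMod (p ^ t)) ^ 2
          = ∑ i, (((z.1 i).val : ℕ) : ZMod (p ^ t))
              * ((((z.2 i).val / p : ℕ)) : ZMod (p ^ t)) ^ 2 := by
            refine Finset.sum_congr rfl fun i _ => ?_
            rw [hval i]
        _ = 0 := this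
    · intro w hw
      simp only [mem_coe, mem_filter, mem_univ, true_and] at hw ⊢
      have hval : ∀ i, (((p * ((w.2 i).val) : ℕ) : ZMod (p ^ (t + 2)))).val
          = p * (w.2 i).val := fun i => val_p_mul hp (t + 1) (w.2 i)
      constructor
      · refine (eqn_iff hp t w.1 _ (fun i => ⟨(w.2 i).val, hval i⟩)).mpr ?_
        calc ∑ i, (((w.1 i).val : ℕ) : ZMod (p ^ t))
                * ((((((p * ((w.2 i).val) : ℕ) : ZMod (p ^ (t + 2)))).val / p : ℕ))
                    : ZMod (p ^ t)) ^ 2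
            = ∑ i, (((w.1 i).val : ℕ) : ZMod (p ^ t))
                * (((w.2 i).val : ℕ) : ZMod (p ^ t)) ^ 2 := by
              refine Finset.sum_congr rfl fun i _ => ?_
              rw [hval i, Nat.mul_div_cancel_left _ hp.pos]
          _ = 0 := hw
      · intro i
        exact ⟨(w.2 i).val, hval i⟩
    · intro z hz
      simp only [mem_coe, mem_filter, mem_univ, true_and] at hz
      refine Prod.ext rfl ?_
      funext i
      exact up_down hp (t + 1) (z.2 i) (hz.2 i)
    · intro w _
      refine Prod.ext rfl ?_
      funext i
      exact down_up' hp (t + 1) (w.2 i)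
  rw [step1]
  have hmap2 : ∀ w ∈ (univ.filter fun w : (Fin 4 → ZMod (p ^ (t + 2))) × (Fin 4 → ZMod (p ^ (t + 1))) =>
          ∑ i, (((w.1 i).val : ℕ) : ZMod (p ^ t))
              * (((w.2 i).val : ℕ) : ZMod (p ^ t)) ^ 2 = 0),
      downF p t w ∈ (univ.filter fun z : (Fin 4 → ZMod (p ^ t)) × (Fin 4 → ZMod (p ^ t)) =>
        ∑ i, z.1 i * (z.2 i) ^ 2 = 0) := by
    intro w hw
    simp only [mem_filter, mem_univ, true_and, downF_apply] at hw ⊢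
    exact hw
  rw [card_eq_sum_card_fiberwise hmap2]
  have hfib2 : ∀ v ∈ (univ.filter fun z : (Fin 4 → ZMod (p ^ t)) × (Fin 4 → ZMod (p ^ t)) =>
        ∑ i, z.1 i * (z.2 i) ^ 2 = 0),
      ((univ.filter fun w : (Fin 4 → ZMod (p ^ (t + 2))) × (Fin 4 → ZMod (p ^ (t + 1))) =>
          ∑ i, (((w.1 i).val : ℕ) : ZMod (p ^ t))
              * (((w.2 i).val : ℕ) : ZMod (p ^ t)) ^ 2 = 0).filter
        fun w => downF p t w = v).card = p ^ 12 := by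
    intro v hv
    simp only [mem_filter, mem_univ, true_and] at hv
    have heq : ((univ.filter fun w : (Fin 4 → ZMod (p ^ (t + 2))) × (Fin 4 → ZMod (p ^ (t + 1))) =>
          ∑ i, (((w.1 i).val : ℕ) : ZMod (p ^ t))
              * (((w.2 i).val : ℕ) : ZMod (p ^ t)) ^ 2 = 0).filter
        fun w => downF p t w = v)
        = univ.filter fun w => downF p t w = v := by
      rw [Finset.filter_filter]
      ext w
      simp only [mem_filter, mem_univ, true_and]
      constructor
      · exact fun h => h.2
      · intro h
        refine ⟨?_, h⟩
        have : ∑ i, (downF p t w).1 i * ((downF p t w).2 i) ^ 2 = 0 := by rw [h]; exact hv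
        rw [downF_apply] at this
        exact this
    rw [heq]
    have hcard := fiber_card (downF p t) (downF_surj t) v
    have hdom : Fintype.card ((Fin 4 → ZMod (p ^ (t + 2))) × (Fin 4 → ZMod (p ^ (t + 1))))
        = p ^ 12 * (p ^ (t * 4) * p ^ (t * 4)) := by
      simp only [Fintype.card_prod, Fintype.card_fun, ZMod.card, Fintype.card_fin,
        ← pow_mul, ← pow_add]
      congr 1
      ring
    have hcod : Fintype.card ((Fin 4 → ZMod (p ^ t)) × (Fin 4 → ZMod (p ^ t)))
        = p ^ (t * 4) * p ^ (t * 4) := by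
      simp only [Fintype.card_prod, Fintype.card_fun, ZMod.card, Fintype.card_fin,
        ← pow_mul, ← pow_add]
    rw [hdom, hcod] at hcard
    have hp0 : 0 < p := hp.pos
    have hpos : 0 < p ^ (t * 4) * p ^ (t * 4) := by positivity
    exact Nat.eq_of_mul_eq_mul_right hpos hcard
  rw [Finset.sum_congr rfl hfib2, Finset.sum_const, smul_eq_mul, mul_comm]

end Prime3

/-- `nn p k` : the count at modulus `p^k`. -/
def nn (p k : ℕ) [NeZero p] : ℕ :=
  (univ.filter fun z : (Fin 4 → ZMod (p ^ k)) × (Fin 4 → ZMod (p ^ k)) =>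
    ∑ i, z.1 i * (z.2 i) ^ 2 = 0).card

section Prime4
variable {p : ℕ} [NeZero p] (hp : p.Prime)
include hp

lemma nn_rec (t : ℕ) :
    nn p (t + 2) = p ^ 12 * nn p t
      + (p ^ (4 * (t + 2)) - p ^ (4 * (t + 1))) * p ^ (3 * (t + 2)) := by
  have h := Finset.card_filter_add_card_filter_not
    (s := univ.filter fun z : (Fin 4 → ZMod (p ^ (t + 2))) × (Fin 4 → ZMod (p ^ (t + 2))) =>
      ∑ i, z.1 i * (z.2 i) ^ 2 = 0)
    (p := fun z => ∀ i, p ∣ (z.2 i).val)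
  rw [Finset.filter_filter, Finset.filter_filter] at h
  have h2 : (univ.filter fun z : (Fin 4 → ZMod (p ^ (t + 2))) × (Fin 4 → ZMod (p ^ (t + 2))) =>
        (∑ i, z.1 i * (z.2 i) ^ 2 = 0) ∧ (∀ i, p ∣ (z.2 i).val)).card
      + (univ.filter fun z : (Fin 4 → ZMod (p ^ (t + 2))) × (Fin 4 → ZMod (p ^ (t + 2))) =>
        (∑ i, z.1 i * (z.2 i) ^ 2 = 0) ∧ ¬(∀ i, p ∣ (z.2 i).val)).card
      = nn p (t + 2) := h
  rw [← h2, card_div_part hp t]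
  congr 1
  exact card_unit_part hp (t + 1)

lemma nn_zero : nn p 0 = 1 := by
  have hss : Subsingleton (ZMod (p ^ 0)) := by rw [pow_zero]; infer_instance
  have hall : ∀ z : (Fin 4 → ZMod (p ^ 0)) × (Fin 4 → ZMod (p ^ 0)),
      ∑ i, z.1 i * (z.2 i) ^ 2 = 0 := fun z => Subsingleton.elim _ _
  unfold nn
  rw [Finset.filter_true_of_mem (fun z _ => hall z), card_univ]
  simp [ZMod.card]

lemma nn_one : nn p 1 = (p ^ 4 - 1) * p ^ 3 + p ^ 4 := by
  have h := Finset.card_filter_add_card_filter_not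
    (s := univ.filter fun z : (Fin 4 → ZMod (p ^ 1)) × (Fin 4 → ZMod (p ^ 1)) =>
      ∑ i, z.1 i * (z.2 i) ^ 2 = 0)
    (p := fun z => ∀ i, p ∣ (z.2 i).val)
  rw [Finset.filter_filter, Finset.filter_filter] at h
  have h2 : (univ.filter fun z : (Fin 4 → ZMod (p ^ 1)) × (Fin 4 → ZMod (p ^ 1)) =>
        (∑ i, z.1 i * (z.2 i) ^ 2 = 0) ∧ (∀ i, p ∣ (z.2 i).val)).card
      + (univ.filter fun z : (Fin 4 → ZMod (p ^ 1)) × (Fin 4 → ZMod (p ^ 1)) =>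
        (∑ i, z.1 i * (z.2 i) ^ 2 = 0) ∧ ¬(∀ i, p ∣ (z.2 i).val)).card
      = nn p 1 := h
  have hzero : ∀ y : ZMod (p ^ 1), p ∣ y.val → y = 0 := by
    intro y hy
    rw [← ZMod.val_eq_zero]
    have hlt : y.val < p := lt_of_lt_of_eq (ZMod.val_lt y) (pow_one p)
    exact Nat.eq_zero_of_dvd_of_lt hy hlt
  have hdivset : (univ.filter fun z : (Fin 4 → ZMod (p ^ 1)) × (Fin 4 → ZMod (p ^ 1)) =>
        (∑ i, z.1 i * (z.2 i) ^ 2 = 0) ∧ (∀ i, p ∣ (z.2 i).val))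
      = univ.filter fun z => z.2 = 0 := by
    ext z
    simp only [mem_filter, mem_univ, true_and]
    constructor
    · intro ⟨_, h2'⟩
      funext i
      exact hzero _ (h2' i)
    · intro h
      refine ⟨?_, ?_⟩
      · rw [h]; simp
      · intro i; rw [h]; simp
  have hdivcard : (univ.filter fun z : (Fin 4 → ZMod (p ^ 1)) × (Fin 4 → ZMod (p ^ 1)) =>
      z.2 = 0).card = p ^ 4 := by
    have := card_nbij'
      (s := univ.filter fun z : (Fin 4 → ZMod (p ^ 1)) × (Fin 4 → ZMod (p ^ 1)) => z.2 = 0)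
      (t := (univ : Finset (Fin 4 → ZMod (p ^ 1))))
      (fun z => z.1) (fun x => (x, 0))
      (fun z _ => mem_univ _)
      (by intro x _; simp)
      (by
        intro z hz
        simp only [mem_coe, mem_filter, mem_univ, true_and] at hz
        exact Prod.ext rfl hz.symm)
      (fun x _ => rfl)
    rw [this, card_univ]
    simp [ZMod.card]
  rw [← h2, hdivset, hdivcard]
  have hu := card_unit_part hp 0
  rw [show (univ.filter fun z : (Fin 4 → ZMod (p ^ 1)) × (Fin 4 → ZMod (p ^ 1)) =>
        (∑ i, z.1 i * (z.2 i) ^ 2 = 0) ∧ ¬(∀ i, p ∣ (z.2 i).val)).card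
      = (p ^ (4 * 1) - p ^ (4 * 0)) * p ^ (3 * 1) from hu]
  have e1 : p ^ (4 * 1) = p ^ 4 := by norm_num
  have e2 : p ^ (4 * 0) = 1 := by norm_num
  have e3 : p ^ (3 * 1) = p ^ 3 := by norm_num
  rw [e1, e2, e3]
  ring

lemma err_rec (t : ℕ) :
    ((nn p (t + 2) : ℝ) - (1 + ((p : ℝ)⁻¹) ^ 2) * (p : ℝ) ^ (7 * (t + 2)))
      = (p : ℝ) ^ 12 * ((nn p t : ℝ) - (1 + ((p : ℝ)⁻¹) ^ 2) * (p : ℝ) ^ (7 * t)) := by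
  have hle : p ^ (4 * (t + 1)) ≤ p ^ (4 * (t + 2)) :=
    Nat.pow_le_pow_right hp.pos (by omega)
  have hcast : (nn p (t + 2) : ℝ) = (p : ℝ) ^ 12 * (nn p t : ℝ)
      + ((p : ℝ) ^ (4 * (t + 2)) - (p : ℝ) ^ (4 * (t + 1))) * (p : ℝ) ^ (3 * (t + 2)) := by
    rw [nn_rec hp t]
    push_cast [Nat.cast_sub hle]
    ring
  rw [hcast]
  have hp0 : (p : ℝ) ≠ 0 := Nat.cast_ne_zero.mpr hp.ne_zero
  field_simp
  ring

lemma err_bound (t : ℕ) :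
    |(nn p t : ℝ) - (1 + ((p : ℝ)⁻¹) ^ 2) * (p : ℝ) ^ (7 * t)| ≤ (p : ℝ) ^ (6 * t) := by
  have hp1 : (1 : ℝ) ≤ (p : ℝ) := by exact_mod_cast hp.one_lt.le
  have hp0 : (0 : ℝ) < (p : ℝ) := by exact_mod_cast hp.pos
  induction t using Nat.twoStepInduction with
  | zero =>
    rw [nn_zero hp]
    simp only [Nat.mul_zero, pow_zero, Nat.cast_one, mul_one]
    rw [show (1 : ℝ) - (1 + ((p : ℝ)⁻¹) ^ 2) = -(((p : ℝ)⁻¹) ^ 2) by ring, abs_neg,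
      abs_of_nonneg (by positivity)]
    have : ((p : ℝ)⁻¹) ≤ 1 := inv_le_one_of_one_le₀ hp1
    nlinarith [inv_nonneg.mpr hp0.le]
  | one =>
    rw [nn_one hp]
    have hle : (1 : ℕ) ≤ p ^ 4 := Nat.one_le_pow _ _ hp.pos
    have hcast : (((p ^ 4 - 1) * p ^ 3 + p ^ 4 : ℕ) : ℝ)
        = ((p : ℝ) ^ 4 - 1) * (p : ℝ) ^ 3 + (p : ℝ) ^ 4 := by
      push_cast [Nat.cast_sub hle]
      ring
    rw [hcast]
    have hinv : (1 + ((p : ℝ)⁻¹) ^ 2) * (p : ℝ) ^ (7 * 1) = (p : ℝ) ^ 7 + (p : ℝ) ^ 5 := by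
      have hp0' : (p : ℝ) ≠ 0 := hp0.ne'
      field_simp
    rw [hinv]
    have e1 : (p : ℝ) ^ 3 ≤ (p : ℝ) ^ 4 := pow_le_pow_right₀ hp1 (by omega)
    have e2 : (p : ℝ) ^ 5 ≤ (p : ℝ) ^ 6 := pow_le_pow_right₀ hp1 (by omega)
    have e3 : (p : ℝ) ^ 4 ≤ (p : ℝ) ^ 6 := pow_le_pow_right₀ hp1 (by omega)
    have e4 : (0 : ℝ) ≤ (p : ℝ) ^ 3 := by positivity
    have e5 : (0 : ℝ) ≤ (p : ℝ) ^ 5 := by positivity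
    have e6 : (6 * 1 : ℕ) = 6 := by norm_num
    rw [e6, abs_le]
    constructor <;> nlinarith
  | more t ih _ =>
    have h7 : 7 * (t + 2) = 7 * t + 14 := by ring
    rw [err_rec hp t, abs_mul, abs_of_nonneg (by positivity : (0:ℝ) ≤ (p:ℝ) ^ 12)]
    calc (p : ℝ) ^ 12 * |(nn p t : ℝ) - (1 + ((p : ℝ)⁻¹) ^ 2) * (p : ℝ) ^ (7 * t)|
        ≤ (p : ℝ) ^ 12 * (p : ℝ) ^ (6 * t) := by
          exact mul_le_mul_of_nonneg_left ih (by positivity)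
      _ = (p : ℝ) ^ (6 * (t + 2)) := by
          rw [← pow_add]
          congr 1
          ring

end Prime4
end Stmt17

/-- `nCount q` is the number of pairs `(x, y) ∈ ((ℤ/qℤ)⁴)²` with
`x₁y₁² + x₂y₂² + x₃y₃² + x₄y₄² ≡ 0 mod q`. -/
noncomputable def nCount (q : ℕ) : ℕ :=
  Nat.card {xy : (Fin 4 → ZMod q) × (Fin 4 → ZMod q) // ∑ i, xy.1 i * (xy.2 i) ^ 2 = 0}

namespace Stmt17

lemma nCount_eq {p : ℕ} [NeZero p] (k : ℕ) : nCount (p ^ k) = nn p k := by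
  rw [nCount, Nat.card_eq_fintype_card, Fintype.card_subtype]
  rfl

end Stmt17

theorem stmt_17 (p : ℕ) (hp : p.Prime) :
    (∃ C : ℝ, ∀ t : ℕ, 1 ≤ t →
      |(nCount (p ^ t) : ℝ) - (1 + ((p : ℝ)⁻¹) ^ 2) * (p : ℝ) ^ (7 * t)| ≤
        C * (p : ℝ) ^ (6 * t)) ∧
    Filter.Tendsto (fun t : ℕ => (nCount (p ^ t) : ℝ) / (p : ℝ) ^ (7 * t))
      Filter.atTop (nhds (1 + ((p : ℝ)⁻¹) ^ 2)) := by
  haveI : NeZero p := ⟨hp.ne_zero⟩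
  have hp0 : (0 : ℝ) < (p : ℝ) := by exact_mod_cast hp.pos
  have hp1 : (1 : ℝ) < (p : ℝ) := by exact_mod_cast hp.one_lt
  constructor
  · refine ⟨1, fun t _ => ?_⟩
    rw [Stmt17.nCount_eq t, one_mul]
    exact Stmt17.err_bound hp t
  · have key : ∀ t : ℕ,
        dist ((nCount (p ^ t) : ℝ) / (p : ℝ) ^ (7 * t)) (1 + ((p : ℝ)⁻¹) ^ 2)
          ≤ ((p : ℝ)⁻¹) ^ t := by
      intro t
      have hpow : (0 : ℝ) < (p : ℝ) ^ (7 * t) := by positivity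
      have hsub : (nCount (p ^ t) : ℝ) / (p : ℝ) ^ (7 * t) - (1 + ((p : ℝ)⁻¹) ^ 2)
          = ((nCount (p ^ t) : ℝ) - (1 + ((p : ℝ)⁻¹) ^ 2) * (p : ℝ) ^ (7 * t))
            / (p : ℝ) ^ (7 * t) := by
        field_simp
      rw [Real.dist_eq, hsub, abs_div, abs_of_pos hpow]
      have hb : |(nCount (p ^ t) : ℝ) - (1 + ((p : ℝ)⁻¹) ^ 2) * (p : ℝ) ^ (7 * t)|
          ≤ (p : ℝ) ^ (6 * t) := by
        rw [Stmt17.nCount_eq t]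
        exact Stmt17.err_bound hp t
      have hratio : (p : ℝ) ^ (6 * t) / (p : ℝ) ^ (7 * t) = ((p : ℝ)⁻¹) ^ t := by
        rw [inv_pow, div_eq_iff hpow.ne', show 7 * t = t + 6 * t from by ring, pow_add,
          ← mul_assoc, inv_mul_cancel₀ (pow_ne_zero _ hp0.ne'), one_mul]
      exact le_trans ((div_le_div_iff_of_pos_right hpow).mpr hb) (le_of_eq hratio)
    rw [tendsto_iff_dist_tendsto_zero]
    have hlim : Filter.Tendsto (fun t : ℕ => ((p : ℝ)⁻¹) ^ t) Filter.atTop (nhds 0) :=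
      tendsto_pow_atTop_nhds_zero_of_lt_one (by positivity) (inv_lt_one_of_one_lt₀ hp1)
    exact squeeze_zero (fun t => dist_nonneg) key hlim
end
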